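/- arXiv:1405.2750 — 5 statements merged into one kernel-verified Lean document; each statement's English description precedes it below -/
import Mathlib

section
/- Let A be a C*-algebra and B a C*-subalgebra of A such that the quotient vector space A/B is finite-dimensional. Then the set I = {x ∈ B : xA ⊆ B} is a closed two-sided ideal of A which is contained in B and has finite codimension in A (as a vector subspace). -/
open Polynomial Unitization

section KatsuraHelpers

lemma aux_poly_bound {s : ℝ} (h0 : 0 ≤ s) (h1 : s ≤ 1) (n : ℕ) :
    s * (1 - s) ^ n ≤ 1 / ((n : ℝ) + 1) := by
  have h1s : (0:ℝ) ≤ 1 - s := by linarith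
  have hb : 1 + (n:ℝ) * s ≤ (1 + s) ^ n := one_add_mul_le_pow (by linarith) n
  have h2 : (1-s)^n * (1 + (n:ℝ)*s) ≤ (1-s)^n * (1+s)^n :=
    mul_le_mul_of_nonneg_left hb (pow_nonneg h1s n)
  have h3 : (1-s)^n * (1+s)^n ≤ 1 := by
    rw [← mul_pow]
    apply pow_le_one₀ (by nlinarith) (by nlinarith)
  rw [le_div_iff₀ (by positivity : (0:ℝ) < (n:ℝ)+1)]
  calc s * (1-s)^n * ((n:ℝ)+1) = (((n:ℝ)+1) * s) * (1-s)^n := by ring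
    _ ≤ (1 + (n:ℝ)*s) * (1-s)^n :=
        mul_le_mul_of_nonneg_right (by linarith) (pow_nonneg h1s n)
    _ = (1-s)^n * (1+(n:ℝ)*s) := by ring
    _ ≤ 1 := le_trans h2 h3

variable {A : Type*} [NonUnitalCStarAlgebra A]

local notation "A₁" => Unitization ℂ A

lemma aux_real_smul (r : ℝ) (y : A₁) : r • y = ((r : ℂ)) • y := by
  rw [← smul_one_smul ℂ r y, Complex.real_smul, mul_one]

lemma aux_real_smul_mem (K : Submodule ℂ A) (r : ℝ) {k : A} (hk : k ∈ K) : r • k ∈ K := by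
  rw [← smul_one_smul ℂ r k, Complex.real_smul, mul_one]; exact K.smul_mem _ hk

lemma aux_inr_of_fst_zero {y : A₁} (hy : y.fst = 0) : ((y.snd : A) : A₁) = y := by
  conv_rhs => rw [← Unitization.inl_fst_add_inr_snd_eq y]
  rw [hy]
  simp

lemma aux_inr_sub (z k : A) : ((z - k : A) : A₁) = (z : A₁) - (k : A₁) := by
  apply Unitization.ext <;> simp

lemma aux_inr_sum {ι : Type*} (t : Finset ι) (w : ι → A) :
    ((∑ i ∈ t, w i : A) : A₁) = ∑ i ∈ t, ((w i : A) : A₁) := by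
  classical
  induction t using Finset.cons_induction with
  | empty => simp
  | cons i t hit ih => rw [Finset.sum_cons, Finset.sum_cons, Unitization.inr_add, ih]

lemma aux_mul_inr_mem (K : Submodule ℂ A) (hAK : ∀ k ∈ K, ∀ a : A, a * k ∈ K)
    (y : A₁) {k : A} (hk : k ∈ K) : ∃ k' ∈ K, y * (k : A₁) = (k' : A₁) := by
  refine ⟨y.fst • k + y.snd * k, K.add_mem (K.smul_mem _ hk) (hAK k hk _), ?_⟩
  conv_lhs => rw [← Unitization.inl_fst_add_inr_snd_eq y]
  rw [add_mul, Unitization.inl_mul_inr, ← Unitization.inr_mul, ← Unitization.inr_add]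

lemma aux_star_aeval {H : A₁} (hH : star H = H) (P : ℝ[X]) : star (aeval H P) = aeval H P := by
  rw [aeval_eq_sum_range, star_sum]
  refine Finset.sum_congr rfl fun i _ => ?_
  rw [star_smul, star_trivial, star_pow, hH]

/-- iterated product in the non-unital algebra: `auxNpow h m = h ^ (m+1)`. -/
def auxNpow (h : A) : ℕ → A
  | 0 => h
  | m + 1 => auxNpow h m * h

lemma aux_npow_inr (h : A) (m : ℕ) : ((auxNpow h m : A) : A₁) = (h : A₁) ^ (m + 1) := by
  induction m with
  | zero => simp [auxNpow]
  | succ m ih => rw [auxNpow, pow_succ, ← ih, ← Unitization.inr_mul]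

lemma aux_npow_comm (h : A) (m : ℕ) : auxNpow h m * h = h * auxNpow h m := by
  induction m with
  | zero => rfl
  | succ m ih => rw [auxNpow, mul_assoc, ← mul_assoc h, ← ih, mul_assoc]

lemma aux_star_npow {h : A} (hh : star h = h) (m : ℕ) : star (auxNpow h m) = auxNpow h m := by
  induction m with
  | zero => simpa [auxNpow] using hh
  | succ m ih => rw [auxNpow, star_mul, hh, ih, aux_npow_comm]

lemma aux_hereditary (K : Submodule ℂ A) (hcl : IsClosed (K : Set A))
    (hKA : ∀ k ∈ K, ∀ a : A, k * a ∈ K) (hAK : ∀ k ∈ K, ∀ a : A, a * k ∈ K)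
    {z : A} (hz : z * star z ∈ K) : z ∈ K := by
  classical
  set w := z * star z with hw
  by_cases hR0 : ‖w‖ = 0
  · have hz0 : z = 0 := by
      have h2 : ‖z‖ * ‖z‖ = 0 := by rw [← CStarRing.norm_self_mul_star]; exact hR0
      have := mul_self_eq_zero.mp h2
      simpa [norm_eq_zero] using this
    exact hz0 ▸ K.zero_mem
  have hRpos : 0 < ‖w‖ := (norm_nonneg w).lt_of_ne (Ne.symm hR0)
  set R : ℝ := ‖w‖ with hRdef
  set r : ℝ := R⁻¹ with hrdef
  have hrpos : 0 < r := inv_pos.mpr hRpos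
  set W : A₁ := (w : A₁) with hWdef
  have hwsa : star w = w := by simp [hw, star_mul]
  have hWsa : IsSelfAdjoint W := by
    rw [IsSelfAdjoint, hWdef, ← Unitization.inr_star, hwsa]
  have hWnn : 0 ≤ W := by
    rw [hWdef, hw, Unitization.inr_mul, Unitization.inr_star]
    exact mul_star_self_nonneg _
  have hnormW : ‖W‖ = R := by rw [hWdef, Unitization.norm_inr]
  have hspec : ∀ t ∈ spectrum ℝ W, 0 ≤ t ∧ t ≤ R := by
    intro t ht
    refine ⟨spectrum_nonneg_of_nonneg hWnn ht, ?_⟩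
    have h1 : ‖t‖ ≤ ‖W‖ := spectrum.norm_le_norm_of_mem ht
    rw [hnormW, Real.norm_eq_abs] at h1
    exact (le_abs_self t).trans h1
  set V : A₁ := 1 - r • W with hVdef
  have hVsa : star V = V := by
    rw [hVdef, star_sub, star_one, star_smul, star_trivial, hWsa.star_eq]
  have hcomm : Commute W V := by
    rw [hVdef]
    exact Commute.sub_right (Commute.one_right W) ((Commute.refl W).smul_right r)
  have hkey : ∀ n : ℕ, ∃ k ∈ K, (z : A₁) - V ^ n * (z : A₁) = (k : A₁) := by
    intro n
    have h1V : (1:A₁) - V = r • W := by rw [hVdef, sub_sub_cancel]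
    have hgeo : (1:A₁) - V ^ n = (∑ i ∈ Finset.range n, V ^ i) * (r • W) := by
      have hg := geom_sum_mul V n
      have : (1:A₁) - V ^ n = (∑ i ∈ Finset.range n, V ^ i) * (1 - V) := by
        rw [mul_sub, mul_one, ← neg_sub (V ^ n) 1, ← hg, mul_sub, mul_one, neg_sub]
      rw [this, h1V]
    have hwzK : r • (w * z) ∈ K := aux_real_smul_mem K r (hKA w hz z)
    obtain ⟨k, hkK, hk⟩ := aux_mul_inr_mem K hAK (∑ i ∈ Finset.range n, V ^ i) hwzK
    refine ⟨k, hkK, ?_⟩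
    have hWz : (r • W) * (z : A₁) = ((r • (w * z) : A) : A₁) := by
      rw [smul_mul_assoc, hWdef, ← Unitization.inr_mul, Unitization.inr_smul]
    calc (z : A₁) - V ^ n * (z : A₁) = ((1:A₁) - V ^ n) * (z : A₁) := by
          rw [sub_mul, one_mul]
      _ = (∑ i ∈ Finset.range n, V ^ i) * ((r • W) * (z : A₁)) := by rw [hgeo, mul_assoc]
      _ = (k : A₁) := by rw [hWz, hk]
  have hnorm : ∀ n : ℕ, ‖W * V ^ n‖ ≤ R * (1 / ((n:ℝ) + 1)) := by
    intro n
    have hpoly : W * V ^ n = aeval W (X * (1 - C r * X) ^ n) := by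
      rw [map_mul, map_pow, map_sub, map_one, map_mul, aeval_X, aeval_C, ← Algebra.smul_def,
        hVdef]
    rw [hpoly, ← cfc_polynomial _ W hWsa]
    apply norm_cfc_le (mul_nonneg hRpos.le (by positivity))
    intro t ht
    obtain ⟨ht0, htR⟩ := hspec t ht
    have hrt0 : 0 ≤ r * t := by positivity
    have hrt1 : r * t ≤ 1 := by
      rw [hrdef, inv_mul_eq_div]
      exact (div_le_one hRpos).mpr htR
    have heval : (X * (1 - C r * X) ^ n).eval t = t * (1 - r * t) ^ n := by simp
    rw [Real.norm_eq_abs, heval, abs_of_nonneg (mul_nonneg ht0 (pow_nonneg (by linarith) n))]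
    have key : (r * t) * (1 - r * t) ^ n ≤ 1 / ((n:ℝ) + 1) := aux_poly_bound hrt0 hrt1 n
    have hRr : R * r = 1 := mul_inv_cancel₀ (ne_of_gt hRpos)
    have ht' : t = R * (r * t) := by rw [← mul_assoc, hRr, one_mul]
    calc t * (1 - r * t) ^ n = R * ((r * t) * (1 - r * t) ^ n) := by
          rw [← mul_assoc, ← ht']
      _ ≤ R * (1 / ((n:ℝ) + 1)) := mul_le_mul_of_nonneg_left key hRpos.le
  have hclose : ∀ ε : ℝ, 0 < ε → ∃ k ∈ K, ‖z - k‖ < ε := by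
    intro ε hε
    obtain ⟨n, hn⟩ := exists_nat_gt (R / (ε * ε))
    obtain ⟨k, hkK, hk⟩ := hkey n
    refine ⟨k, hkK, ?_⟩
    have e1 : V ^ n * (z : A₁) = ((z - k : A) : A₁) := by
      rw [aux_inr_sub, ← hk, sub_sub_cancel]
    have e2 : ‖z - k‖ * ‖z - k‖ = ‖W * V ^ (2 * n)‖ := by
      calc ‖z - k‖ * ‖z - k‖ = ‖((z - k : A) : A₁)‖ * ‖((z - k : A) : A₁)‖ := by
            rw [Unitization.norm_inr]
        _ = ‖((z - k : A) : A₁) * star ((z - k : A) : A₁)‖ := (CStarRing.norm_self_mul_star).symm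
        _ = ‖(V ^ n * (z : A₁)) * (star (z : A₁) * V ^ n)‖ := by
            rw [← e1, star_mul, star_pow, hVsa]
        _ = ‖(W * V ^ n) * V ^ n‖ := by
            have h5 : (V ^ n * (z : A₁)) * (star (z : A₁) * V ^ n)
                = (V ^ n * ((z : A₁) * star (z : A₁))) * V ^ n := by
              noncomm_ring
            rw [h5, ← Unitization.inr_star, ← Unitization.inr_mul, ← hw, ← hWdef,
              ((hcomm.pow_right n).symm).eq]
        _ = ‖W * V ^ (2 * n)‖ := by rw [mul_assoc, ← pow_add, two_mul]
    have e3 : ‖z - k‖ * ‖z - k‖ < ε * ε := by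
      have b1 := hnorm (2 * n)
      rw [← e2] at b1
      have b2 : R * (1 / (((2*n : ℕ):ℝ) + 1)) < ε * ε := by
        push_cast
        rw [mul_one_div, div_lt_iff₀ (by positivity)]
        rw [div_lt_iff₀ (by positivity)] at hn
        nlinarith [hε, hRpos]
      exact lt_of_le_of_lt b1 b2
    nlinarith [norm_nonneg (z - k), hε]
  have hmem : z ∈ closure (K : Set A) := by
    apply Metric.mem_closure_iff.mpr
    intro ε hε
    obtain ⟨k, hk1, hk2⟩ := hclose ε hε
    exact ⟨k, hk1, by rwa [dist_eq_norm]⟩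
  rwa [hcl.closure_eq] at hmem

end KatsuraHelpers
/-- Katsura's ideal: for a C*-subalgebra `B` of finite codimension in `A`, the set
`I = {x ∈ B : xA ⊆ B}` is a closed two-sided ideal of `A`, contained in `B`,
of finite codimension in `A`. -/
theorem stmt_0 {A : Type*} [NonUnitalCStarAlgebra A]
    (B : NonUnitalStarSubalgebra ℂ A) (hBclosed : IsClosed (B : Set A))
    (hcodim : FiniteDimensional ℂ (A ⧸ B.toNonUnitalSubalgebra.toSubmodule)) :
    ∃ I : Submodule ℂ A,
      (I : Set A) = {x : A | x ∈ B ∧ ∀ a : A, x * a ∈ B} ∧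
      IsClosed (I : Set A) ∧
      (∀ x ∈ I, ∀ a : A, x * a ∈ I ∧ a * x ∈ I) ∧
      I ≤ B.toNonUnitalSubalgebra.toSubmodule ∧
      FiniteDimensional ℂ (A ⧸ I) := by
  classical
  set Bs := B.toNonUnitalSubalgebra.toSubmodule with hBsdef
  have hBsmem : ∀ x : A, x ∈ Bs ↔ x ∈ B := fun _ => Iff.rfl
  -- spanning family of the quotient
  obtain ⟨n, s, hs⟩ := Module.Finite.exists_fin (R := ℂ) (M := A ⧸ Bs)
  choose a ha using fun i => Submodule.Quotient.mk_surjective Bs (s i)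
  have hdecomp : ∀ y : A, ∃ c : Fin n → ℂ, y - ∑ i, c i • a i ∈ Bs := by
    intro y
    have hy : (Submodule.Quotient.mk y : A ⧸ Bs) ∈ Submodule.span ℂ (Set.range s) := by
      rw [hs]; trivial
    rw [Submodule.mem_span_range_iff_exists_fun] at hy
    obtain ⟨c, hc⟩ := hy
    refine ⟨c, ?_⟩
    have h1 : Bs.mkQ (y - ∑ i, c i • a i) = 0 := by
      rw [map_sub, map_sum]
      simp only [map_smul, Submodule.mkQ_apply, ha]
      rw [hc, sub_self]
    rw [← Submodule.ker_mkQ Bs]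
    exact LinearMap.mem_ker.mpr h1
  -- the two submodules
  let Is : Submodule ℂ A :=
    { carrier := {x : A | x ∈ B ∧ ∀ a : A, x * a ∈ B}
      add_mem' := by
        rintro p q ⟨hp1, hp2⟩ ⟨hq1, hq2⟩
        exact ⟨add_mem hp1 hq1, fun y => by rw [add_mul]; exact add_mem (hp2 y) (hq2 y)⟩
      zero_mem' := ⟨zero_mem _, fun y => by rw [zero_mul]; exact zero_mem _⟩
      smul_mem' := by
        rintro c p ⟨hp1, hp2⟩
        exact ⟨SMulMemClass.smul_mem c hp1, fun y => by
          rw [smul_mul_assoc]; exact SMulMemClass.smul_mem c (hp2 y)⟩ }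
  let Ks : Submodule ℂ A :=
    { carrier := {x : A | x ∈ B ∧ ∀ y : A, x * y ∈ B ∧ y * x ∈ B ∧ ∀ c : A, y * x * c ∈ B}
      add_mem' := by
        rintro p q ⟨hp1, hp2⟩ ⟨hq1, hq2⟩
        refine ⟨add_mem hp1 hq1, fun y => ⟨?_, ?_, fun c => ?_⟩⟩
        · rw [add_mul]; exact add_mem (hp2 y).1 (hq2 y).1
        · rw [mul_add]; exact add_mem (hp2 y).2.1 (hq2 y).2.1
        · rw [mul_add, add_mul]; exact add_mem ((hp2 y).2.2 c) ((hq2 y).2.2 c)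
      zero_mem' := by
        refine ⟨zero_mem _, fun y => ⟨?_, ?_, fun c => ?_⟩⟩ <;>
          simp only [zero_mul, mul_zero] <;> exact zero_mem _
      smul_mem' := by
        rintro d p ⟨hp1, hp2⟩
        refine ⟨SMulMemClass.smul_mem d hp1, fun y => ⟨?_, ?_, fun c => ?_⟩⟩
        · rw [smul_mul_assoc]; exact SMulMemClass.smul_mem d (hp2 y).1
        · rw [mul_smul_comm]; exact SMulMemClass.smul_mem d (hp2 y).2.1
        · rw [mul_smul_comm, smul_mul_assoc]
          exact SMulMemClass.smul_mem d ((hp2 y).2.2 c) }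
  have hIsmem : ∀ x : A, x ∈ Is ↔ (x ∈ B ∧ ∀ a : A, x * a ∈ B) := fun _ => Iff.rfl
  have hKsmem : ∀ x : A, x ∈ Ks ↔
      (x ∈ B ∧ ∀ y : A, x * y ∈ B ∧ y * x ∈ B ∧ ∀ c : A, y * x * c ∈ B) := fun _ => Iff.rfl
  -- elementary properties
  have hKI : Ks ≤ Is := fun x hx => ⟨hx.1, fun y => (hx.2 y).1⟩
  have hKsB : ∀ x ∈ Ks, x ∈ B := fun x hx => hx.1
  have hKsA : ∀ k ∈ Ks, ∀ y : A, k * y ∈ Ks := by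
    rintro k ⟨hk1, hk2⟩ y
    refine ⟨(hk2 y).1, fun u => ⟨?_, ?_, fun c => ?_⟩⟩
    · rw [mul_assoc]; exact (hk2 (y * u)).1
    · rw [← mul_assoc]; exact (hk2 u).2.2 y
    · rw [← mul_assoc, mul_assoc (u * k)]; exact (hk2 u).2.2 (y * c)
  have hAKs : ∀ k ∈ Ks, ∀ y : A, y * k ∈ Ks := by
    rintro k ⟨hk1, hk2⟩ y
    refine ⟨(hk2 y).2.1, fun u => ⟨?_, ?_, fun c => ?_⟩⟩
    · exact (hk2 y).2.2 u
    · rw [← mul_assoc]; exact (hk2 (u * y)).2.1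
    · rw [← mul_assoc]; exact (hk2 (u * y)).2.2 c
  have hKstar : ∀ k ∈ Ks, star k ∈ Ks := by
    rintro k ⟨hk1, hk2⟩
    refine ⟨star_mem hk1, fun y => ⟨?_, ?_, fun c => ?_⟩⟩
    · have : star k * y = star (star y * k) := by rw [star_mul, star_star]
      rw [this]; exact star_mem (hk2 (star y)).2.1
    · have : y * star k = star (k * star y) := by rw [star_mul, star_star]
      rw [this]; exact star_mem (hk2 (star y)).1
    · have : y * star k * c = star (star c * k * star y) := by
        rw [star_mul, star_mul, star_star, star_star, mul_assoc]
      rw [this]; exact star_mem ((hk2 (star c)).2.2 (star y))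
  have hIsA : ∀ x ∈ Is, ∀ y : A, x * y ∈ Is := by
    rintro x ⟨hx1, hx2⟩ y
    exact ⟨hx2 y, fun c => by rw [mul_assoc]; exact hx2 (y * c)⟩
  -- closedness
  have hIsclosed : IsClosed (Is : Set A) := by
    have he : (Is : Set A) = (B : Set A) ∩ ⋂ y : A, (fun x => x * y) ⁻¹' (B : Set A) := by
      ext x
      simp only [Set.mem_inter_iff, Set.mem_iInter, Set.mem_preimage, SetLike.mem_coe, hIsmem]
    rw [he]
    exact hBclosed.inter (isClosed_iInter fun y =>
      hBclosed.preimage (continuous_id.mul continuous_const))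
  have hKsclosed : IsClosed (Ks : Set A) := by
    have he : (Ks : Set A) = (B : Set A) ∩ ⋂ y : A,
        ((fun x => x * y) ⁻¹' (B : Set A) ∩ ((fun x => y * x) ⁻¹' (B : Set A) ∩
          ⋂ c : A, (fun x => y * x * c) ⁻¹' (B : Set A))) := by
      ext x
      simp only [Set.mem_inter_iff, Set.mem_iInter, Set.mem_preimage, SetLike.mem_coe, hKsmem]
    rw [he]
    refine hBclosed.inter (isClosed_iInter fun y => ?_)
    refine (hBclosed.preimage (continuous_id.mul continuous_const)).inter ?_
    refine (hBclosed.preimage (continuous_const.mul continuous_id)).inter ?_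
    exact isClosed_iInter fun c =>
      hBclosed.preimage ((continuous_const.mul continuous_id).mul continuous_const)
  -- finite dimensionality of A ⧸ Ks
  have hKfd : FiniteDimensional ℂ (A ⧸ Ks) := by
    let π := Bs.mkQ
    let Φ : A →ₗ[ℂ] (A ⧸ Bs) × ((Fin n → A ⧸ Bs) × ((Fin n → A ⧸ Bs) ×
        (Fin n → Fin n → A ⧸ Bs))) :=
      LinearMap.prod π <| LinearMap.prod
        (LinearMap.pi fun i => π ∘ₗ LinearMap.mulRight ℂ (a i)) <| LinearMap.prod
        (LinearMap.pi fun i => π ∘ₗ LinearMap.mulLeft ℂ (a i))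
        (LinearMap.pi fun i => LinearMap.pi fun j =>
          π ∘ₗ LinearMap.mulRight ℂ (a j) ∘ₗ LinearMap.mulLeft ℂ (a i))
    have hker : LinearMap.ker Φ = Ks := by
      ext x
      have hiff : x ∈ LinearMap.ker Φ ↔
          (x ∈ Bs ∧ (∀ i, x * a i ∈ Bs) ∧ (∀ i, a i * x ∈ Bs) ∧
            ∀ i j, a i * x * a j ∈ Bs) := by
        simp only [LinearMap.mem_ker, Φ, LinearMap.prod_apply, Function.prod, Prod.mk_eq_zero,
          LinearMap.pi_apply, LinearMap.comp_apply, LinearMap.mulRight_apply,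
          LinearMap.mulLeft_apply, funext_iff, Pi.zero_apply, Submodule.mkQ_apply,
          Submodule.Quotient.mk_eq_zero, π]
      rw [hiff, hKsmem]
      constructor
      · rintro ⟨h1, h2, h3, h4⟩
        have S1 : ∀ y : A, x * y ∈ B := by
          intro y
          obtain ⟨c, hc⟩ := hdecomp y
          have hy : y = (∑ i, c i • a i) + (y - ∑ i, c i • a i) := by abel
          rw [hy, mul_add, Finset.mul_sum]
          refine add_mem (sum_mem fun i _ => ?_) (mul_mem h1 hc)
          rw [mul_smul_comm]
          exact SMulMemClass.smul_mem _ (h2 i)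
        have S2 : ∀ y : A, y * x ∈ B := by
          intro y
          obtain ⟨c, hc⟩ := hdecomp y
          have hy : y = (∑ i, c i • a i) + (y - ∑ i, c i • a i) := by abel
          rw [hy, add_mul, Finset.sum_mul]
          refine add_mem (sum_mem fun i _ => ?_) (mul_mem hc h1)
          rw [smul_mul_assoc]
          exact SMulMemClass.smul_mem _ (h3 i)
        have S4 : ∀ (i : Fin n) (z : A), a i * x * z ∈ B := by
          intro i z
          obtain ⟨d, hd⟩ := hdecomp z
          have hz : z = (∑ j, d j • a j) + (z - ∑ j, d j • a j) := by abel
          rw [hz, mul_add, Finset.mul_sum]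
          refine add_mem (sum_mem fun j _ => ?_) (mul_mem (h3 i) hd)
          rw [mul_smul_comm]
          exact SMulMemClass.smul_mem _ (h4 i j)
        have S3 : ∀ y z : A, y * x * z ∈ B := by
          intro y z
          obtain ⟨c, hc⟩ := hdecomp y
          have hy : y = (∑ i, c i • a i) + (y - ∑ i, c i • a i) := by abel
          rw [hy, add_mul, add_mul, Finset.sum_mul, Finset.sum_mul]
          refine add_mem (sum_mem fun i _ => ?_) ?_
          · rw [smul_mul_assoc, smul_mul_assoc]
            exact SMulMemClass.smul_mem _ (S4 i z)
          · rw [mul_assoc]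
            exact mul_mem hc (S1 z)
        exact ⟨h1, fun y => ⟨S1 y, S2 y, fun c => S3 y c⟩⟩
      · rintro ⟨h1, h2⟩
        exact ⟨h1, fun i => (h2 (a i)).1, fun i => (h2 (a i)).2.1,
          fun i j => (h2 (a i)).2.2 (a j)⟩
    rw [← hker]
    exact Module.Finite.equiv Φ.quotKerEquivRange.symm
  have hIfd : FiniteDimensional ℂ (A ⧸ Is) := by
    have hle : Bs.comap (LinearMap.id (R := ℂ) (M := A)) = Bs := rfl
    have hsurj : Function.Surjective
        (Submodule.mapQ Ks Is (LinearMap.id (R := ℂ) (M := A)) hKI) := by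
      intro y
      obtain ⟨x, rfl⟩ := Submodule.Quotient.mk_surjective Is y
      exact ⟨Submodule.Quotient.mk x, by rw [Submodule.mapQ_apply]; rfl⟩
    exact Module.Finite.of_surjective _ hsurj
  -- the analytic core
  have hleft : ∀ x ∈ Is, ∀ u c : A, u * x ∈ B ∧ u * x * c ∈ B := by
    haveI := hKfd
    rintro x ⟨hxB, hxI⟩ u c
    set h := x * star x with hhdef
    have hhsa : star h = h := by simp [hhdef, star_mul]
    have hhI : h ∈ Is := hIsA x ⟨hxB, hxI⟩ (star x)
    set H : Unitization ℂ A := (h : Unitization ℂ A) with hHdef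
    have hHsa : star H = H := by rw [hHdef, ← Unitization.inr_star, hhsa]
    -- the annihilator ideal of (the class of) h in ℝ[X]
    let J : Ideal (Polynomial ℝ) :=
      { carrier := {P : Polynomial ℝ | ∃ k ∈ Ks,
          Polynomial.aeval H (Polynomial.X * P) = (k : Unitization ℂ A)}
        add_mem' := by
          rintro P R ⟨k1, hk1, e1⟩ ⟨k2, hk2, e2⟩
          exact ⟨k1 + k2, Ks.add_mem hk1 hk2, by
            rw [mul_add, map_add, e1, e2, Unitization.inr_add]⟩
        zero_mem' := ⟨0, Ks.zero_mem, by simp⟩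
        smul_mem' := by
          rintro R P ⟨k, hk, e⟩
          obtain ⟨k', hk', e'⟩ := aux_mul_inr_mem Ks hAKs (Polynomial.aeval H R) hk
          refine ⟨k', hk', ?_⟩
          rw [smul_eq_mul,
            show Polynomial.X * (R * P) = R * (Polynomial.X * P) by ring,
            map_mul, e, e'] }
    have hJmem : ∀ P : Polynomial ℝ, P ∈ J ↔ ∃ k ∈ Ks,
        Polynomial.aeval H (Polynomial.X * P) = (k : Unitization ℂ A) := fun _ => Iff.rfl
    -- a nonzero element of J, via finite-dimensionality of A ⧸ Ks
    have hJC : ∀ v : Fin (Module.finrank ℂ (A ⧸ Ks) + 1) → ℝ,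
        ((∑ i, ((v i : ℂ)) • auxNpow h i) ∈ Ks) →
        (∑ i, (Polynomial.C (v i) * Polynomial.X ^ (i : ℕ)) : Polynomial ℝ) ∈ J := by
      intro v hv
      refine ⟨_, hv, ?_⟩
      rw [Finset.mul_sum, map_sum, aux_inr_sum]
      refine Finset.sum_congr rfl fun i _ => ?_
      rw [show Polynomial.X * (Polynomial.C (v i) * Polynomial.X ^ (i:ℕ))
            = Polynomial.C (v i) * Polynomial.X ^ ((i:ℕ) + 1) by ring,
        map_mul, Polynomial.aeval_C, map_pow, Polynomial.aeval_X, ← Algebra.smul_def,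
        aux_real_smul, ← aux_npow_inr, ← Unitization.inr_smul]
    have hJne : ∃ P : Polynomial ℝ, P ≠ 0 ∧ P ∈ J := by
      set N := Module.finrank ℂ (A ⧸ Ks) with hN
      have hdep : ¬ LinearIndependent ℂ
          (fun i : Fin (N+1) => (Submodule.Quotient.mk (auxNpow h i) : A ⧸ Ks)) := by
        intro hli
        have hcard := hli.fintype_card_le_finrank
        rw [Fintype.card_fin] at hcard
        omega
      rw [Fintype.not_linearIndependent_iff] at hdep
      obtain ⟨g, hgsum, i0, hgi0⟩ := hdep
      have hqK : (∑ i, g i • auxNpow h i) ∈ Ks := by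
        rw [← Submodule.ker_mkQ Ks]
        apply LinearMap.mem_ker.mpr
        rw [map_sum]
        simpa only [map_smul, Submodule.mkQ_apply] using hgsum
      have hterm : ∀ i, star (g i • auxNpow h i)
          = (starRingEnd ℂ) (g i) • auxNpow h i := fun i => by
        rw [star_smul, aux_star_npow hhsa, Complex.star_def]
      have hqK2 : (∑ i, (starRingEnd ℂ) (g i) • auxNpow h i) ∈ Ks := by
        have h2' : (∑ i, (starRingEnd ℂ) (g i) • auxNpow h i)
            = star (∑ i, g i • auxNpow h i) := by
          rw [star_sum]
          exact Finset.sum_congr rfl fun i _ => (hterm i).symm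
        rw [h2']
        exact hKstar _ hqK
      by_cases hre : (g i0).re ≠ 0
      · refine ⟨∑ i, (Polynomial.C ((g i).re) * Polynomial.X ^ (i : ℕ)), ?_, ?_⟩
        · intro hP0
          have hco := congrArg (fun P => Polynomial.coeff P (i0 : ℕ)) hP0
          simp only [Polynomial.finset_sum_coeff, Polynomial.coeff_C_mul,
            Polynomial.coeff_X_pow, Polynomial.coeff_zero, mul_ite, mul_one, mul_zero] at hco
          rw [Finset.sum_eq_single i0 (fun i _ hne => by
              simp [Fin.val_eq_val, (Ne.symm hne)]) (by simp)] at hco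
          simp at hco
          exact hre hco
        · apply hJC
          have heq : (∑ i, (((g i).re : ℂ)) • auxNpow h i)
              = (2⁻¹ : ℂ) • ((∑ i, g i • auxNpow h i)
                  + ∑ i, (starRingEnd ℂ) (g i) • auxNpow h i) := by
            rw [← Finset.sum_add_distrib, Finset.smul_sum]
            refine Finset.sum_congr rfl fun i _ => ?_
            rw [← add_smul, smul_smul]
            congr 1
            rw [Complex.add_conj]
            push_cast
            ring
          rw [heq]
          exact Ks.smul_mem _ (Ks.add_mem hqK hqK2)
      · have him : (g i0).im ≠ 0 := by
          intro him0
          apply hgi0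
          apply Complex.ext
          · simpa using hre
          · simpa using him0
        refine ⟨∑ i, (Polynomial.C ((g i).im) * Polynomial.X ^ (i : ℕ)), ?_, ?_⟩
        · intro hP0
          have hco := congrArg (fun P => Polynomial.coeff P (i0 : ℕ)) hP0
          simp only [Polynomial.finset_sum_coeff, Polynomial.coeff_C_mul,
            Polynomial.coeff_X_pow, Polynomial.coeff_zero, mul_ite, mul_one, mul_zero] at hco
          rw [Finset.sum_eq_single i0 (fun i _ hne => by
              simp [Fin.val_eq_val, (Ne.symm hne)]) (by simp)] at hco
          simp at hco
          exact him hco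
        · apply hJC
          have heq : (∑ i, (((g i).im : ℂ)) • auxNpow h i)
              = ((2 * Complex.I)⁻¹ : ℂ) • ((∑ i, g i • auxNpow h i)
                  - ∑ i, (starRingEnd ℂ) (g i) • auxNpow h i) := by
            rw [← Finset.sum_sub_distrib, Finset.smul_sum]
            refine Finset.sum_congr rfl fun i _ => ?_
            rw [← sub_smul, smul_smul]
            congr 1
            rw [Complex.sub_conj]
            rw [inv_mul_eq_div, eq_div_iff (by simp [Complex.I_ne_zero] :
              (2 : ℂ) * Complex.I ≠ 0)]
            push_cast
            ring
          rw [heq]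
          exact Ks.smul_mem _ (Ks.sub_mem hqK hqK2)
    obtain ⟨P0, hP0ne, hP0J⟩ := hJne
    set f := Submodule.IsPrincipal.generator J with hfdef
    have hJf : ∀ P, P ∈ J ↔ f ∣ P := fun P =>
      Submodule.IsPrincipal.mem_iff_generator_dvd J
    have hfne : f ≠ 0 := by
      intro hf0
      apply hP0ne
      have := (hJf P0).mp hP0J
      rwa [hf0, zero_dvd_iff] at this
    have hfst : ∀ P : Polynomial ℝ,
        (Polynomial.aeval H (Polynomial.X * P)).fst = 0 := by
      intro P
      rw [map_mul, Polynomial.aeval_X, Unitization.fst_mul, hHdef, Unitization.fst_inr,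
        zero_mul]
    have hf0 : f.coeff 0 ≠ 0 := by
      intro h0
      set g := f.divX with hgdef
      have hfg : f = Polynomial.X * g := by
        conv_lhs => rw [← Polynomial.X_mul_divX_add f]
        rw [h0, map_zero, add_zero]
      have hgne : g ≠ 0 := by
        intro hg; exact hfne (by rw [hfg, hg, mul_zero])
      set e := (Polynomial.aeval H (Polynomial.X * g)).snd with hedef
      have hee : (e : Unitization ℂ A) = Polynomial.aeval H (Polynomial.X * g) :=
        aux_inr_of_fst_zero (hfst g)
      have hesa : star e = e := by
        have h1 : ((star e : A) : Unitization ℂ A) = (e : Unitization ℂ A) := by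
          rw [Unitization.inr_star, hee, aux_star_aeval hHsa, ← hee]
        exact Unitization.inr_injective h1
      have he2 : e * star e ∈ Ks := by
        rw [hesa]
        obtain ⟨k, hkK, hk⟩ := (hJf (f * g)).mpr (dvd_mul_right f g)
        have h1 : ((e * e : A) : Unitization ℂ A) = (k : Unitization ℂ A) := by
          rw [Unitization.inr_mul, hee, ← map_mul,
            show (Polynomial.X * g) * (Polynomial.X * g)
              = Polynomial.X * (f * g) by rw [hfg]; ring, hk]
        exact (Unitization.inr_injective h1) ▸ hkK
      have heK : e ∈ Ks := aux_hereditary Ks hKsclosed hKsA hAKs he2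
      have hgJ : g ∈ J := ⟨e, heK, hee.symm⟩
      have hdvd : f ∣ g := (hJf g).mp hgJ
      rw [hfg] at hdvd
      have hdeg := Polynomial.natDegree_le_of_dvd hdvd hgne
      rw [Polynomial.natDegree_X_mul hgne] at hdeg
      omega
    -- construct the approximate unit Q
    set c0 := f.coeff 0 with hc0
    set G : Polynomial ℝ := Polynomial.C (-c0⁻¹) * f.divX with hGdef
    set E : Polynomial ℝ := Polynomial.X * G with hEdef
    clear_value E
    have hE1 : E - 1 = Polynomial.C (-c0⁻¹) * f := by
      have h1 : Polynomial.X * f.divX = f - Polynomial.C c0 := by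
        conv_rhs => rw [← Polynomial.X_mul_divX_add f]
        rw [hc0]; ring
      calc E - 1 = Polynomial.C (-c0⁻¹) * (Polynomial.X * f.divX) - 1 := by
            rw [hEdef, hGdef]; ring
        _ = Polynomial.C (-c0⁻¹) * (f - Polynomial.C c0) - 1 := by rw [h1]
        _ = Polynomial.C (-c0⁻¹) * f := by
            rw [mul_sub, ← Polynomial.C_mul,
              show (-c0⁻¹ * c0 : ℝ) = -1 by field_simp,
              show (Polynomial.C (-1 : ℝ)) = -1 by simp]
            ring
    set Q := (Polynomial.aeval H E).snd with hQdef
    have hQfst : (Polynomial.aeval H E).fst = 0 := by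
      rw [hEdef]; exact hfst G
    have hQQ : (Q : Unitization ℂ A) = Polynomial.aeval H E := aux_inr_of_fst_zero hQfst
    have hQsa : star Q = Q := by
      have h1 : ((star Q : A) : Unitization ℂ A) = (Q : Unitization ℂ A) := by
        rw [Unitization.inr_star, hQQ, aux_star_aeval hHsa, ← hQQ]
      exact Unitization.inr_injective h1
    have hQI : Q ∈ Is := by
      have h1 : (Q : Unitization ℂ A) = H * Polynomial.aeval H G := by
        rw [hQQ, hEdef, map_mul, Polynomial.aeval_X]
      have h3 := congrArg (fun y : Unitization ℂ A => y.snd) h1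
      rw [Unitization.snd_inr, Unitization.snd_mul, hHdef, Unitization.fst_inr,
        Unitization.snd_inr, zero_smul, zero_add] at h3
      rw [h3]
      exact Is.add_mem (Is.smul_mem _ hhI) (hIsA h hhI _)
    have hQB : Q ∈ B := hQI.1
    have hQmul : ∀ y : A, Q * y ∈ B := hQI.2
    have hQhK : Q * h - h ∈ Ks := by
      obtain ⟨k, hkK, hk⟩ := (hJf (Polynomial.C (-c0⁻¹) * f)).mpr (dvd_mul_left f _)
      have h1 : ((Q * h - h : A) : Unitization ℂ A) = (k : Unitization ℂ A) := by
        rw [aux_inr_sub, Unitization.inr_mul, hQQ, ← hHdef, ← hk,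
          show Polynomial.X * (Polynomial.C (-c0⁻¹) * f)
            = E * Polynomial.X - Polynomial.X by rw [← hE1]; ring,
          map_sub, map_mul, Polynomial.aeval_X]
      exact (Unitization.inr_injective h1) ▸ hkK
    have hQ2K : Q * Q - Q ∈ Ks := by
      obtain ⟨k, hkK, hk⟩ := (hJf (G * (Polynomial.C (-c0⁻¹) * f))).mpr
        ⟨G * Polynomial.C (-c0⁻¹), by ring⟩
      have h1 : ((Q * Q - Q : A) : Unitization ℂ A) = (k : Unitization ℂ A) := by
        rw [aux_inr_sub, Unitization.inr_mul, hQQ, ← hk,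
          show Polynomial.X * (G * (Polynomial.C (-c0⁻¹) * f)) = E * E - E by
            rw [← hE1, hEdef]; ring,
          map_sub, map_mul]
      exact (Unitization.inr_injective h1) ▸ hkK
    set z := x - Q * x with hzdef
    have hzK : z ∈ Ks := by
      apply aux_hereditary Ks hKsclosed hKsA hAKs
      have hstarz : star z = star x - star x * Q := by rw [hzdef, star_sub, star_mul, hQsa]
      have hzz : z * star z = -(Q * h - h) + (Q * h - h) * Q := by
        rw [hzdef, hstarz, hhdef]
        noncomm_ring
      rw [hzz]
      exact Ks.add_mem (Ks.neg_mem hQhK) (hKsA _ hQhK Q)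
    have haQ : u * Q ∈ B := by
      have h1 : u * Q = star (Q * star u) := by rw [star_mul, star_star, hQsa]
      rw [h1]; exact star_mem (hQmul (star u))
    have hqmem : (Q - Q * Q) ∈ Ks := by
      have h1 := Ks.neg_mem hQ2K
      rwa [neg_sub] at h1
    constructor
    · have hux : u * x = (u * Q) * (Q * x) + (u * ((Q - Q * Q) * x) + u * z) := by
        rw [hzdef]; noncomm_ring
      rw [hux]
      refine add_mem (mul_mem haQ (hQmul x)) (add_mem ?_ ?_)
      · exact hKsB _ (hAKs _ (hKsA _ hqmem x) u)
      · exact hKsB _ (hAKs _ hzK u)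
    · have hux : u * x * c = (u * Q) * (Q * (x * c))
          + (u * ((Q - Q * Q) * (x * c)) + u * (z * c)) := by
        rw [hzdef]; noncomm_ring
      rw [hux]
      refine add_mem (mul_mem haQ (hQmul (x * c))) (add_mem ?_ ?_)
      · exact hKsB _ (hAKs _ (hKsA _ hqmem (x * c)) u)
      · exact hKsB _ (hAKs _ (hKsA _ hzK c) u)
  refine ⟨Is, rfl, hIsclosed, ?_, fun x hx => hx.1, hIfd⟩
  intro x hx y
  refine ⟨hIsA x hx y, ?_⟩
  rw [hIsmem]
  exact ⟨(hleft x hx y y).1, fun c => (hleft x hx y c).2⟩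
end

section
/- Let A be a C*-algebra and B a closed *-subalgebra of A. The set I = {x ∈ B : xA ⊆ B} is a closed right ideal of A, and moreover it is self-adjoint in the following sense: if x ∈ I then for all a ∈ A, ax ∈ B. Consequently I is a two-sided ideal of A. -/
open scoped ContinuousMapZero

lemma cfcn_mem_elemental {A : Type*} [NonUnitalCStarAlgebra A] {h : A} (hh : IsSelfAdjoint h)
    {f : ℝ → ℝ} (hf : Continuous f) (hf0 : f 0 = 0) :
    cfcₙ f h ∈ NonUnitalStarAlgebra.elemental ℝ h := by
  have hf' : ContinuousOn f (quasispectrum ℝ h) := hf.continuousOn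
  rw [cfcₙ_apply f h hf' hf0 hh]
  have hdense := ContinuousMapZero.adjoin_id_dense (quasispectrum ℝ h)
  have hcont : Continuous (cfcₙHom (R := ℝ) hh) := (cfcₙHom_isClosedEmbedding hh).continuous
  have hmap : Set.MapsTo (cfcₙHom (R := ℝ) hh)
      (NonUnitalStarAlgebra.adjoin ℝ {(ContinuousMapZero.id (quasispectrum ℝ h) : C(quasispectrum ℝ h, ℝ)₀)} : Set _)
      (NonUnitalStarAlgebra.adjoin ℝ {h} : Set A) := by
    intro g hg
    have h1 := NonUnitalStarAlgHom.map_adjoin_singleton (cfcₙHom (R := ℝ) hh)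
      (ContinuousMapZero.id (quasispectrum ℝ h) : C(quasispectrum ℝ h, ℝ)₀)
    have h2 : cfcₙHom (R := ℝ) hh (ContinuousMapZero.id (quasispectrum ℝ h)) = h := cfcₙHom_id hh
    rw [h2] at h1
    rw [SetLike.mem_coe, ← h1]
    exact NonUnitalStarSubalgebra.mem_map.mpr ⟨g, hg, rfl⟩
  exact map_mem_closure hcont (hdense _) hmap

lemma key_lemma {A : Type*} [NonUnitalCStarAlgebra A]
    (B : NonUnitalStarSubalgebra ℂ A) (hBclosed : IsClosed (B : Set A))
    {x : A} (hx1 : x ∈ B) (hx2 : ∀ a : A, x * a ∈ B) (a : A) : a * x ∈ B := by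
  classical
  set C : Set A := {y : A | y ∈ B ∧ ∀ a : A, y * a ∈ B} with hC
  have hCclosed : IsClosed C := by
    have : C = (B : Set A) ∩ ⋂ a : A, (fun y => y * a) ⁻¹' (B : Set A) := by
      ext y; simp [hC, Set.mem_iInter]
    rw [this]
    exact hBclosed.inter <| isClosed_iInter fun a =>
      hBclosed.preimage (continuous_mul_right a)
  set J : Set A := C ∩ (star ⁻¹' C) with hJ
  have hJclosed : IsClosed J := hCclosed.inter (hCclosed.preimage continuous_star)
  set h : A := star x * x with hdef
  have hsa : IsSelfAdjoint h := IsSelfAdjoint.star_mul_self x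
  have hmemJ : h ∈ J := by
    have h1 : h ∈ B := mul_mem (star_mem hx1) hx1
    have h2 : ∀ a : A, h * a ∈ B := fun a => by
      rw [hdef, mul_assoc]; exact mul_mem (star_mem hx1) (hx2 a)
    exact ⟨⟨h1, h2⟩, by rw [Set.mem_preimage, hsa.star_eq]; exact ⟨h1, h2⟩⟩
  -- nonnegativity of the quasispectrum of h
  have hquasi : ∀ t ∈ quasispectrum ℝ h, 0 ≤ t := by
    rw [hdef, Unitization.quasispectrum_eq_spectrum_inr' ℝ ℂ]
    intro t ht
    rw [Unitization.inr_mul, Unitization.inr_star] at ht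
    exact spectrum_star_mul_self_nonneg t ht
  -- J contains the adjoin of h
  have hadj : (NonUnitalStarAlgebra.adjoin ℝ ({h} : Set A) : Set A) ⊆ J := by
    intro y hy
    have hy' : y ∈ NonUnitalStarAlgebra.adjoin ℝ ({h} : Set A) := hy
    clear hy
    have hsm : ∀ (r : ℝ) (w : A), w ∈ B → r • w ∈ B := fun r w hw => by
      rw [← algebraMap_smul ℂ r w]; exact SMulMemClass.smul_mem _ hw
    induction hy' using NonUnitalStarAlgebra.adjoin_induction with
    | mem z hz => exact Set.mem_singleton_iff.mp hz ▸ hmemJ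
    | add z w _ _ hz hw =>
        exact ⟨⟨add_mem hz.1.1 hw.1.1,
            fun a => by rw [add_mul]; exact add_mem (hz.1.2 a) (hw.1.2 a)⟩,
          ⟨by rw [star_add]; exact add_mem hz.2.1 hw.2.1,
           fun a => by rw [star_add, add_mul]; exact add_mem (hz.2.2 a) (hw.2.2 a)⟩⟩
    | zero => exact ⟨⟨zero_mem _, fun a => by simpa using zero_mem B⟩,
        ⟨by simpa using zero_mem B, fun a => by simpa using zero_mem B⟩⟩
    | mul z w _ _ hz hw =>
        exact ⟨⟨mul_mem hz.1.1 hw.1.1,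
            fun a => by rw [mul_assoc]; exact mul_mem hz.1.1 (hw.1.2 a)⟩,
          ⟨by rw [star_mul]; exact mul_mem hw.2.1 hz.2.1,
           fun a => by rw [star_mul, mul_assoc]; exact mul_mem hw.2.1 (hz.2.2 a)⟩⟩
    | smul r z _ hz =>
        exact ⟨⟨hsm r z hz.1.1, fun a => by rw [smul_mul_assoc]; exact hsm r _ (hz.1.2 a)⟩,
          ⟨by rw [star_smul, star_trivial]; exact hsm r _ hz.2.1,
           fun a => by rw [star_smul, star_trivial, smul_mul_assoc]; exact hsm r _ (hz.2.2 a)⟩⟩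
    | star z _ hz => exact ⟨hz.2, by simpa using hz.1⟩
  have helem : (NonUnitalStarAlgebra.elemental ℝ h : Set A) ⊆ J :=
    closure_minimal hadj hJclosed
  -- product expansion
  have comb : ∀ g : ℝ → ℝ, Continuous g → g 0 = 0 →
      star (x - x * cfcₙ g h) * (x - x * cfcₙ g h) =
        cfcₙ (fun t => t - t * g t - (g t * t - g t * (t * g t))) h := by
    intro g hg hg0
    have hesa : IsSelfAdjoint (cfcₙ g h) := cfcₙ_predicate g h
    have c3 : Continuous (fun t : ℝ => t * g t) := continuous_id.mul hg
    have c4 : Continuous (fun t : ℝ => g t * t) := hg.mul continuous_id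
    have c5 : Continuous (fun t : ℝ => g t * (t * g t)) := hg.mul c3
    have c6 : Continuous (fun t : ℝ => g t * t - g t * (t * g t)) := c4.sub c5
    have c7 : Continuous (fun t : ℝ => t - t * g t) := continuous_id.sub c3
    have step1 : cfcₙ (fun t => t - t * g t - (g t * t - g t * (t * g t))) h
        = cfcₙ (fun t : ℝ => t - t * g t) h
            - cfcₙ (fun t : ℝ => g t * t - g t * (t * g t)) h :=
      cfcₙ_sub _ _ h c7.continuousOn (by simp [hg0]) c6.continuousOn (by simp [hg0])
    have step2 : cfcₙ (fun t : ℝ => t - t * g t) h = h - h * cfcₙ g h := by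
      rw [cfcₙ_sub (fun t : ℝ => t) _ h continuousOn_id rfl c3.continuousOn (by simp [hg0]),
        cfcₙ_mul (fun t : ℝ => t) g h continuousOn_id rfl hg.continuousOn hg0, cfcₙ_id' ℝ h]
    have step3 : cfcₙ (fun t : ℝ => g t * t - g t * (t * g t)) h
        = cfcₙ g h * h - cfcₙ g h * (h * cfcₙ g h) := by
      rw [cfcₙ_sub _ _ h c4.continuousOn (by simp [hg0]) c5.continuousOn (by simp [hg0]),
        cfcₙ_mul g (fun t : ℝ => t) h hg.continuousOn hg0 continuousOn_id rfl,
        cfcₙ_mul g (fun t : ℝ => t * g t) h hg.continuousOn hg0 c3.continuousOn (by simp [hg0]),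
        cfcₙ_mul (fun t : ℝ => t) g h continuousOn_id rfl hg.continuousOn hg0, cfcₙ_id' ℝ h]
    rw [step1, step2, step3, star_sub, star_mul, hesa.star_eq, hdef]
    noncomm_ring
  -- the approximation step
  have happrox : ∀ ε : ℝ, 0 < ε → ∃ e ∈ J, IsSelfAdjoint e ∧ ‖x - x * e‖ < ε := by
    intro ε hε
    set c : ℝ := (1 / (2 * ε ^ 2)) ^ 2 + 1 with hcdef
    have hc0 : 0 < c := by positivity
    have hcs : 0 < Real.sqrt c := Real.sqrt_pos.mpr hc0
    have hc : 1 / (2 * Real.sqrt c) < ε ^ 2 := by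
      have h1 : 1 / (2 * ε ^ 2) < Real.sqrt c := by
        rw [hcdef]
        calc 1 / (2 * ε ^ 2) = Real.sqrt ((1 / (2 * ε ^ 2)) ^ 2) := by
              rw [Real.sqrt_sq (by positivity)]
          _ < Real.sqrt ((1 / (2 * ε ^ 2)) ^ 2 + 1) := by
              apply Real.sqrt_lt_sqrt (by positivity); linarith
      rw [div_lt_iff₀ (by positivity)]
      rw [div_lt_iff₀ (by positivity)] at h1
      nlinarith
    set g : ℝ → ℝ := fun t => c * t ^ 2 / (c * t ^ 2 + 1) with hgdef
    have hden : ∀ t : ℝ, 0 < c * t ^ 2 + 1 := fun t => by positivity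
    have hgc : Continuous g :=
      (continuous_const.mul (continuous_pow 2)).div
        ((continuous_const.mul (continuous_pow 2)).add continuous_const)
        (fun t => (hden t).ne')
    have hg0 : g 0 = 0 := by simp [hgdef]
    refine ⟨cfcₙ g h, helem (cfcn_mem_elemental hsa hgc hg0), cfcₙ_predicate g h, ?_⟩
    have hb2 : ‖x - x * cfcₙ g h‖ ^ 2 < ε ^ 2 := by
      have h1 : ‖x - x * cfcₙ g h‖ ^ 2 = ‖star (x - x * cfcₙ g h) * (x - x * cfcₙ g h)‖ := by
        rw [CStarRing.norm_star_mul_self]; ring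
      rw [h1, comb g hgc hg0]
      refine lt_of_le_of_lt (norm_cfcₙ_le ?_) hc
      intro t ht
      have ht0 : 0 ≤ t := hquasi t ht
      have hF : t - t * g t - (g t * t - g t * (t * g t)) = t / (c * t ^ 2 + 1) ^ 2 := by
        rw [hgdef]; field_simp; ring
      rw [hF, Real.norm_eq_abs, abs_of_nonneg (by positivity)]
      rw [div_le_div_iff₀ (by positivity) (by positivity)]
      have hsq : Real.sqrt c ^ 2 = c := Real.sq_sqrt hc0.le
      nlinarith [sq_nonneg (Real.sqrt c * t - 1), sq_nonneg (c * t ^ 2),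
        mul_nonneg (mul_nonneg hc0.le (sq_nonneg t)) (mul_nonneg hc0.le (sq_nonneg t))]
    exact lt_of_pow_lt_pow_left₀ 2 hε.le hb2
  -- conclusion
  have hcl : a * x ∈ closure (B : Set A) := by
    rw [Metric.mem_closure_iff]
    intro ε hε
    obtain ⟨e, heJ, hesa, hlt⟩ := happrox (ε / (‖a‖ + 1)) (by positivity)
    refine ⟨a * x * e, ?_, ?_⟩
    · have h1 : e * star (a * x) ∈ B := heJ.1.2 _
      have h2 := star_mem h1
      rwa [star_mul, star_star, hesa.star_eq] at h2
    · rw [dist_eq_norm]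
      have h3 : a * x - a * x * e = a * (x - x * e) := by noncomm_ring
      rw [h3]
      calc ‖a * (x - x * e)‖ ≤ ‖a‖ * ‖x - x * e‖ := norm_mul_le _ _
        _ < ε := by
            have h4 : (‖a‖ + 1) * (ε / (‖a‖ + 1)) = ε := by
              field_simp
            nlinarith [norm_nonneg (x - x * e), norm_nonneg a]
  rwa [hBclosed.closure_eq] at hcl

/-- The set `I = {x ∈ B : xA ⊆ B}` is a closed right ideal of `A`, it is self-adjoint in the
sense that `x ∈ I` implies `ax ∈ B` for all `a ∈ A`, and consequently it is a two-sided
ideal of `A`. -/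
theorem stmt_2 {A : Type*} [NonUnitalCStarAlgebra A]
    (B : NonUnitalStarSubalgebra ℂ A) (hBclosed : IsClosed (B : Set A)) :
    ∀ I : Set A, I = {x : A | x ∈ B ∧ ∀ a : A, x * a ∈ B} →
      IsClosed I ∧ (0 : A) ∈ I ∧
      (∀ x ∈ I, ∀ y ∈ I, x + y ∈ I) ∧
      (∀ (c : ℂ), ∀ x ∈ I, c • x ∈ I) ∧
      (∀ x ∈ I, ∀ a : A, x * a ∈ I) ∧
      (∀ x ∈ I, ∀ a : A, a * x ∈ B) ∧
      (∀ x ∈ I, ∀ a : A, a * x ∈ I) := by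
  intro I hI
  subst hI
  refine ⟨?_, ?_, ?_, ?_, ?_, ?_, ?_⟩
  · have : {x : A | x ∈ B ∧ ∀ a : A, x * a ∈ B} =
        (B : Set A) ∩ ⋂ a : A, (fun y => y * a) ⁻¹' (B : Set A) := by
      ext y; simp [Set.mem_iInter]
    rw [this]
    exact hBclosed.inter <| isClosed_iInter fun a =>
      hBclosed.preimage (continuous_mul_right a)
  · exact ⟨zero_mem _, fun a => by simpa using zero_mem B⟩
  · exact fun x hx y hy => ⟨add_mem hx.1 hy.1,
      fun a => by rw [add_mul]; exact add_mem (hx.2 a) (hy.2 a)⟩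
  · exact fun c x hx => ⟨SMulMemClass.smul_mem c hx.1,
      fun a => by rw [smul_mul_assoc]; exact SMulMemClass.smul_mem c (hx.2 a)⟩
  · exact fun x hx a => ⟨hx.2 a, fun a' => by rw [mul_assoc]; exact hx.2 _⟩
  · exact fun x hx a => key_lemma B hBclosed hx.1 hx.2 a
  · intro x hx a
    refine ⟨key_lemma B hBclosed hx.1 hx.2 a, fun a' => ?_⟩
    rw [mul_assoc]
    exact key_lemma B hBclosed (hx.2 a') (fun a'' => by rw [mul_assoc]; exact hx.2 _) a
end

section
/- Let I be a closed two-sided ideal of finite codimension in a C*-algebra A. Then there is a decomposition A = A' ⊕ G as a direct sum of C*-algebras, where G = I^⊥ is the (finite-dimensional) annihilator of I, e is the unit of G, A' = (1−e)A(1−e), and I is an essential ideal of A'. -/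
section Aux

variable {A : Type*} [NonUnitalCStarAlgebra A]

/-- helper: `star a * a = 0 → a = 0` in a nonunital C*-algebra. -/
lemma aux_eq_zero_of_star_mul_self (a : A) (h : star a * a = 0) : a = 0 := by
  have h1 : ‖star a * a‖ = ‖a‖ * ‖a‖ := CStarRing.norm_star_mul_self
  rw [h, norm_zero] at h1
  have : ‖a‖ = 0 := by nlinarith [norm_nonneg a]
  exact norm_eq_zero.mp this

lemma aux_eq_zero_of_mul_star_self (a : A) (h : a * star a = 0) : a = 0 := by
  have : star (star a) * star a = 0 := by rwa [star_star]
  simpa using congrArg star (aux_eq_zero_of_star_mul_self (star a) this)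

/-- If a finite sum of elements of the form `star (f i) * f i + star (k i) * k i` is zero,
then each `f i` and `k i` vanishes. (Via positivity in the unitization.) -/
lemma aux_sum_zero {ι : Type*} (s : Finset ι) (f k : ι → A)
    (h : ∑ i ∈ s, (star (f i) * f i + star (k i) * k i) = 0) :
    ∀ i ∈ s, f i = 0 ∧ k i = 0 := by
  intro i hi
  have hB : ∑ j ∈ s, ((star (f j) * f j + star (k j) * k j : A) : Unitization ℂ A) = 0 := by
    rw [show (∑ j ∈ s, ((star (f j) * f j + star (k j) * k j : A) : Unitization ℂ A))
        = ((∑ j ∈ s, (star (f j) * f j + star (k j) * k j) : A) : Unitization ℂ A) from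
      (map_sum (Unitization.inrNonUnitalAlgHom ℂ A) _ s).symm, h, Unitization.inr_zero]
  have hcast : ∀ j : ι, ((star (f j) * f j + star (k j) * k j : A) : Unitization ℂ A)
      = star ((f j : Unitization ℂ A)) * (f j : Unitization ℂ A)
        + star ((k j : Unitization ℂ A)) * (k j : Unitization ℂ A) := by
    intro j
    rw [Unitization.inr_add, Unitization.inr_mul, Unitization.inr_mul,
      Unitization.inr_star, Unitization.inr_star]
  simp only [hcast] at hB
  have hnn : ∀ j ∈ s, (0 : Unitization ℂ A) ≤ star ((f j : Unitization ℂ A)) * (f j : Unitization ℂ A)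
        + star ((k j : Unitization ℂ A)) * (k j : Unitization ℂ A) := fun j _ =>
    add_nonneg (star_mul_self_nonneg _) (star_mul_self_nonneg _)
  have hterm := (Finset.sum_eq_zero_iff_of_nonneg hnn).mp hB i hi
  have h2 := (add_eq_zero_iff_of_nonneg (star_mul_self_nonneg _) (star_mul_self_nonneg _)).mp hterm
  constructor
  · have : (f i : Unitization ℂ A) = 0 := (CStarRing.star_mul_self_eq_zero_iff _).mp h2.1
    exact Unitization.inr_injective (by simpa using this)
  · have : (k i : Unitization ℂ A) = 0 := (CStarRing.star_mul_self_eq_zero_iff _).mp h2.2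
    exact Unitization.inr_injective (by simpa using this)

/-- The annihilator of `I` as a submodule. -/
def annSub (I : Submodule ℂ A) : Submodule ℂ A where
  carrier := {g | ∀ x ∈ I, g * x = 0 ∧ x * g = 0}
  add_mem' := by
    intro a b ha hb x hx
    exact ⟨by rw [add_mul, (ha x hx).1, (hb x hx).1, add_zero],
      by rw [mul_add, (ha x hx).2, (hb x hx).2, add_zero]⟩
  zero_mem' := fun x _ => ⟨zero_mul x, mul_zero x⟩
  smul_mem' := by
    intro c a ha x hx
    exact ⟨by rw [smul_mul_assoc, (ha x hx).1, smul_zero],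
      by rw [mul_smul_comm, (ha x hx).2, smul_zero]⟩

lemma mem_annSub {I : Submodule ℂ A} {g : A} :
    g ∈ annSub I ↔ ∀ x ∈ I, g * x = 0 ∧ x * g = 0 := Iff.rfl

end Aux

/-- Decomposition `A = A' ⊕ G` where `G = I^⊥` is the finite-dimensional annihilator of a
closed two-sided ideal `I` of finite codimension, with unit `e`, `A' = (1-e)A(1-e)`
(described by `e*a' = 0 ∧ a'*e = 0`), and `I` essential in `A'`. -/
theorem stmt_5 {A : Type*} [NonUnitalCStarAlgebra A]
    (I : Submodule ℂ A) (hIclosed : IsClosed (I : Set A))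
    (hIideal : ∀ x ∈ I, ∀ a : A, x * a ∈ I ∧ a * x ∈ I)
    (hfin : FiniteDimensional ℂ (A ⧸ I)) :
    ∃ e : A,
      -- e lies in the annihilator G of I (so I ⊆ A' = (1-e)A(1-e))
      (∀ x ∈ I, e * x = 0 ∧ x * e = 0) ∧
      -- e is a projection
      star e = e ∧ e * e = e ∧
      -- e is a unit for G
      (∀ g : A, (∀ x ∈ I, g * x = 0 ∧ x * g = 0) → e * g = g ∧ g * e = g) ∧
      -- G is finite-dimensional
      (∃ s : Finset A, ∀ g : A, (∀ x ∈ I, g * x = 0 ∧ x * g = 0) →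
        g ∈ Submodule.span ℂ (s : Set A)) ∧
      -- A = A' ⊕ G : existence of the decomposition
      (∀ a : A, ∃ a' g : A, a = a' + g ∧ e * a' = 0 ∧ a' * e = 0 ∧
        (∀ x ∈ I, g * x = 0 ∧ x * g = 0)) ∧
      -- the summands are orthogonal
      (∀ a' g : A, e * a' = 0 → a' * e = 0 → (∀ x ∈ I, g * x = 0 ∧ x * g = 0) →
        a' * g = 0 ∧ g * a' = 0) ∧
      -- I is essential in A'
      (∀ a' : A, e * a' = 0 → a' * e = 0 →
        (∀ x ∈ I, a' * x = 0 ∧ x * a' = 0) → a' = 0) := by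
  classical
  set G : Submodule ℂ A := annSub I with hGdef
  -- G is a two-sided ideal
  have hGl : ∀ (a : A), ∀ g ∈ G, a * g ∈ G := by
    intro a g hg x hx
    refine ⟨by rw [mul_assoc, (hg x hx).1, mul_zero], ?_⟩
    rw [← mul_assoc]
    exact (hg (x * a) (hIideal x hx a).1).2
  have hGr : ∀ g ∈ G, ∀ (a : A), g * a ∈ G := by
    intro g hg a x hx
    refine ⟨?_, by rw [← mul_assoc, (hg x hx).2, zero_mul]⟩
    rw [mul_assoc]
    exact (hg (a * x) (hIideal x hx a).2).1
  -- G ∩ I = 0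
  have hGI : ∀ g ∈ G, g ∈ I → g = 0 := by
    intro g hg hgI
    have hc : star g * g ∈ I := (hIideal g hgI (star g)).2
    have h2 : star (star g * g) * (star g * g) = 0 := by
      rw [star_mul, star_star, mul_assoc, (hg _ hc).1, mul_zero]
    have := aux_eq_zero_of_star_mul_self _ h2
    exact aux_eq_zero_of_star_mul_self g this
  -- G is finite-dimensional
  have hfinG : FiniteDimensional ℂ G := by
    refine FiniteDimensional.of_injective (I.mkQ.comp G.subtype) ?_
    refine (injective_iff_map_eq_zero _).mpr fun g hg0 => ?_
    have : (g : A) ∈ I := by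
      simpa [Submodule.Quotient.mk_eq_zero] using hg0
    exact Subtype.ext (hGI g g.2 this)
  obtain ⟨s, hs⟩ : ∃ s : Finset A, Submodule.span ℂ (s : Set A) = G :=
    Module.Finite.iff_fg.mp hfinG
  have hsG : ∀ x ∈ s, x ∈ G := fun x hx => hs ▸ Submodule.subset_span hx
  -- the auxiliary positive element h
  set h : A := ∑ x ∈ s, (star x * x + x * star x) with hhdef
  have hh : h ∈ G := Submodule.sum_mem _ fun x hx =>
    G.add_mem (hGl (star x) x (hsG x hx)) (hGr x (hsG x hx) (star x))
  -- span argument: if star x * g = 0 for all x ∈ s then star g * g = 0, etc.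
  have hspan : ∀ (g : A), (∀ x ∈ s, x * g = 0) → ∀ y ∈ Submodule.span ℂ (s : Set A), y * g = 0 := by
    intro g hx y hy
    induction hy using Submodule.span_induction with
    | mem z hz => exact hx z hz
    | zero => exact zero_mul g
    | add y z _ _ hy hz => rw [add_mul, hy, hz, add_zero]
    | smul c y _ hy => rw [smul_mul_assoc, hy, smul_zero]
  have hspan' : ∀ (g : A), (∀ x ∈ s, star x * g = 0) →
      ∀ y ∈ Submodule.span ℂ (s : Set A), star y * g = 0 := by
    intro g hx y hy
    induction hy using Submodule.span_induction with
    | mem z hz => exact hx z hz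
    | zero => rw [star_zero, zero_mul]
    | add y z _ _ hy hz => rw [star_add, add_mul, hy, hz, add_zero]
    | smul c y _ hy => rw [star_smul, smul_mul_assoc, hy, smul_zero]
  -- injectivity of left multiplication by h on G
  have hLinj : ∀ g ∈ G, h * g = 0 → g = 0 := by
    intro g hg h0
    have hsum : ∑ x ∈ s, (star (x * g) * (x * g) + star (star x * g) * (star x * g)) = 0 := by
      have : star g * (h * g) = 0 := by rw [h0, mul_zero]
      rw [hhdef] at this
      rw [← this, Finset.sum_mul, Finset.mul_sum]
      refine Finset.sum_congr rfl fun x hx => ?_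
      simp only [star_mul, star_star, add_mul, mul_add]
      noncomm_ring
    have key := aux_sum_zero s (fun x => x * g) (fun x => star x * g) hsum
    have hxg : ∀ x ∈ s, star x * g = 0 := fun x hx => (key x hx).2
    have : star g * g = 0 := hspan' g hxg g (hs ▸ hg)
    exact aux_eq_zero_of_star_mul_self g this
  -- injectivity of right multiplication by h on G
  have hRinj : ∀ g ∈ G, g * h = 0 → g = 0 := by
    intro g hg h0
    have hsum : ∑ x ∈ s,
        (star (x * star g) * (x * star g) + star (star x * star g) * (star x * star g)) = 0 := by
      have : (g * h) * star g = 0 := by rw [h0, zero_mul]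
      rw [hhdef] at this
      rw [← this, Finset.mul_sum, Finset.sum_mul]
      refine Finset.sum_congr rfl fun x hx => ?_
      simp only [star_mul, star_star, add_mul, mul_add]
      noncomm_ring
    have key := aux_sum_zero s (fun x => x * star g) (fun x => star x * star g) hsum
    have hxg : ∀ x ∈ s, x * star g = 0 := fun x hx => (key x hx).1
    have : g * star g = 0 := hspan (star g) hxg g (hs ▸ hg)
    exact aux_eq_zero_of_mul_star_self g this
  -- left unit
  let L : G →ₗ[ℂ] G :=
    { toFun := fun g => ⟨h * (g : A), hGl h g g.2⟩
      map_add' := by intro a b; ext; simp [mul_add]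
      map_smul' := by intro c a; ext; simp [mul_smul_comm] }
  have hLapp : ∀ g : G, ((L g : A)) = h * (g : A) := fun g => rfl
  have hLs : Function.Surjective L := by
    refine LinearMap.injective_iff_surjective.mp ?_
    refine (injective_iff_map_eq_zero _).mpr fun g hg0 => ?_
    exact Subtype.ext (hLinj g g.2 (by simpa [hLapp] using congrArg Subtype.val hg0))
  obtain ⟨u, hu⟩ := hLs ⟨h, hh⟩
  have hu' : h * (u : A) = h := congrArg Subtype.val hu
  have hleft : ∀ g ∈ G, (u : A) * g = g := by
    intro g hg
    have hmem : (u : A) * g - g ∈ G := G.sub_mem (hGl u g hg) hg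
    have : h * ((u : A) * g - g) = 0 := by
      rw [mul_sub, ← mul_assoc, hu', sub_self]
    exact sub_eq_zero.mp (hLinj _ hmem this)
  -- right unit
  let R : G →ₗ[ℂ] G :=
    { toFun := fun g => ⟨(g : A) * h, hGr g g.2 h⟩
      map_add' := by intro a b; ext; simp [add_mul]
      map_smul' := by intro c a; ext; simp [smul_mul_assoc] }
  have hRapp : ∀ g : G, ((R g : A)) = (g : A) * h := fun g => rfl
  have hRs : Function.Surjective R := by
    refine LinearMap.injective_iff_surjective.mp ?_
    refine (injective_iff_map_eq_zero _).mpr fun g hg0 => ?_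
    exact Subtype.ext (hRinj g g.2 (by simpa [hRapp] using congrArg Subtype.val hg0))
  obtain ⟨v, hv⟩ := hRs ⟨h, hh⟩
  have hv' : (v : A) * h = h := congrArg Subtype.val hv
  have hright : ∀ g ∈ G, g * (v : A) = g := by
    intro g hg
    have hmem : g * (v : A) - g ∈ G := G.sub_mem (hGr g hg v) hg
    have : (g * (v : A) - g) * h = 0 := by
      rw [sub_mul, mul_assoc, hv', sub_self]
    exact sub_eq_zero.mp (hRinj _ hmem this)
  -- the unit e of G
  have huv : (u : A) = (v : A) := by
    have h1 : (u : A) * (v : A) = (v : A) := hleft v v.2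
    have h2 : (u : A) * (v : A) = (u : A) := hright u u.2
    rw [← h1, h2]
  set e : A := (u : A) with hedef
  have he_mem : e ∈ G := u.2
  have hunit : ∀ g ∈ G, e * g = g ∧ g * e = g := fun g hg =>
    ⟨hleft g hg, by rw [huv]; exact hright g hg⟩
  have he_idem : e * e = e := (hunit e he_mem).1
  -- e is central in A
  have hcentral : ∀ a : A, e * a = a * e := by
    intro a
    have h1 : e * (a * e) = a * e := (hunit (a * e) (hGl a e he_mem)).1
    have h2 : (e * a) * e = e * a := (hunit (e * a) (hGr e he_mem a)).2
    rw [← h2, mul_assoc, h1]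
  -- e is self-adjoint
  have he_star : star e = e := by
    have hc : e * star e = star e * e := hcentral (star e)
    have hse : star e * star e = star e := by rw [← star_mul, he_idem]
    have hq1 : e * (star e * e) = star e * e := by
      rw [← mul_assoc, hc, mul_assoc, he_idem]
    have hq2 : (star e * e) * star e = star e * e := by
      rw [mul_assoc, hc, ← mul_assoc, hse]
    have hq3 : (star e * e) * (star e * e) = star e * e := by
      rw [← mul_assoc, hq2, mul_assoc, he_idem]
    have hqstar : star (star e * e) = star e * e := by rw [star_mul, star_star]
    have hd : (e - star e * e) * star (e - star e * e) = 0 := by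
      rw [star_sub, hqstar]
      have expand : (e - star e * e) * (star e - star e * e)
          = e * star e - e * (star e * e) - (star e * e) * star e
            + (star e * e) * (star e * e) := by noncomm_ring
      rw [expand, hc, hq1, hq2, hq3]
      abel
    have := aux_eq_zero_of_mul_star_self _ hd
    have he_eq : e = star e * e := sub_eq_zero.mp this
    rw [he_eq, hqstar]
  -- conclusions
  refine ⟨e, he_mem, he_star, he_idem, fun g hg => hunit g hg, ⟨s, fun g hg => hs ▸ hg⟩,
    ?_, ?_, ?_⟩
  · intro a
    refine ⟨a - e * a, e * a, (sub_add_cancel a (e * a)).symm, ?_, ?_, hGr e he_mem a⟩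
    · rw [mul_sub, ← mul_assoc, he_idem, sub_self]
    · rw [sub_mul, mul_assoc, ← hcentral a, ← mul_assoc, he_idem]
      exact sub_self _
  · intro a' g h1 h2 hg
    constructor
    · rw [← (hunit g hg).1, ← mul_assoc, h2, zero_mul]
    · rw [← (hunit g hg).2, mul_assoc, h1, mul_zero]
  · intro a' h1 h2 hann
    have : a' ∈ G := fun x hx => hann x hx
    rw [← (hunit a' this).1, h1]
end

section
/- Let A be a C*-algebra with closed two-sided ideal I, let G = I^⊥, and suppose dim(A/I) < ∞. Writing A = A' ⊕ G with A' = (1−e)A(1−e) as above, and letting p : A → F := A/I be the quotient map, the quotient splits compatibly: F ≅ F' ⊕ G where F' = p(A'), and under this identification p corresponds to p' ⊕ id_G, where p' : A' → F' is the quotient map by I. -/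
/-- Compatible splitting of the quotient: with `A = A' ⊕ G`, `A' = (1-e)A(1-e)`,
`G = I^⊥`, the quotient `F = A/I` splits as `F' ⊕ G` where `F' = p(A')`, the quotient map
being injective (isometric) on `G` and corresponding to `p' ⊕ id_G`. -/
theorem stmt_7 {A : Type*} [NonUnitalCStarAlgebra A]
    (I : Submodule ℂ A) (hIclosed : IsClosed (I : Set A))
    (hIideal : ∀ x ∈ I, ∀ a : A, x * a ∈ I ∧ a * x ∈ I)
    (hfin : FiniteDimensional ℂ (A ⧸ I))
    (e : A) (heG : ∀ x ∈ I, e * x = 0 ∧ x * e = 0)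
    (hestar : star e = e) (heidem : e * e = e)
    (heunit : ∀ g : A, (∀ x ∈ I, g * x = 0 ∧ x * g = 0) → e * g = g ∧ g * e = g) :
    -- p is injective on G
    Set.InjOn I.mkQ {g : A | ∀ x ∈ I, g * x = 0 ∧ x * g = 0} ∧
    -- F = F' ⊕ p(G)
    Submodule.span ℂ (I.mkQ '' {a : A | e * a = 0 ∧ a * e = 0}) ⊓
      Submodule.span ℂ (I.mkQ '' {g : A | ∀ x ∈ I, g * x = 0 ∧ x * g = 0}) = ⊥ ∧
    Submodule.span ℂ (I.mkQ '' {a : A | e * a = 0 ∧ a * e = 0}) ⊔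
      Submodule.span ℂ (I.mkQ '' {g : A | ∀ x ∈ I, g * x = 0 ∧ x * g = 0}) = ⊤ ∧
    -- p corresponds to p' ⊕ id_G on the decomposition A = A' ⊕ G
    (∀ a : A, ∃ a' g : A, e * a' = 0 ∧ a' * e = 0 ∧
      (∀ x ∈ I, g * x = 0 ∧ x * g = 0) ∧ I.mkQ a = I.mkQ a' + I.mkQ g) := by
  -- key: G ∩ I = 0
  have key : ∀ x : A, x ∈ I → (∀ y ∈ I, x * y = 0 ∧ y * x = 0) → x = 0 := by
    intro x hxI hxG
    have hsx : star x * x ∈ I := (hIideal x hxI (star x)).2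
    have h0 : x * (star x * x) = 0 := (hxG _ hsx).1
    have h2 : (star x * x) * (star x * x) = 0 := by
      rw [mul_assoc, h0, mul_zero]
    have hn1 : ‖star x * x‖ = 0 := by
      have h3 := CStarRing.norm_star_mul_self (x := star x * x)
      rw [star_mul, star_star, h2, norm_zero] at h3
      exact mul_self_eq_zero.mp h3.symm
    have hn2 : ‖x‖ * ‖x‖ = 0 := by
      rw [← CStarRing.norm_star_mul_self, hn1]
    exact norm_eq_zero.mp (mul_self_eq_zero.mp hn2)
  -- the decomposition a = a' + g
  have decomp : ∀ a : A, ∃ a' g : A, e * a' = 0 ∧ a' * e = 0 ∧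
      (∀ x ∈ I, g * x = 0 ∧ x * g = 0) ∧ a = a' + g := by
    intro a
    refine ⟨a - e * a - a * e + e * a * e, e * a + a * e - e * a * e, ?_, ?_, ?_, by abel⟩
    · simp only [mul_sub, mul_add, ← mul_assoc, heidem]; abel
    · simp only [sub_mul, add_mul, mul_assoc, heidem]
      simp only [← mul_assoc, heidem]; abel
    · intro x hx
      have hax : a * x ∈ I := (hIideal x hx a).2
      have hxa : x * a ∈ I := (hIideal x hx a).1
      constructor
      · have h1 : e * a * x = 0 := by rw [mul_assoc]; exact (heG _ hax).1
        have h2 : a * e * x = 0 := by rw [mul_assoc, (heG x hx).1, mul_zero]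
        have h3 : e * a * e * x = 0 := by rw [mul_assoc, (heG x hx).1, mul_zero]
        simp [add_mul, sub_mul, h1, h2, h3]
      · have h1 : x * (e * a) = 0 := by rw [← mul_assoc, (heG x hx).2, zero_mul]
        have h2 : x * (a * e) = 0 := by rw [← mul_assoc]; exact (heG _ hxa).2
        have h3 : x * (e * a * e) = 0 := by rw [← mul_assoc, ← mul_assoc, (heG x hx).2]; simp
        simp [mul_add, mul_sub, h1, h2, h3]
  -- submodules
  let SA : Submodule ℂ A :=
    { carrier := {a : A | e * a = 0 ∧ a * e = 0}
      add_mem' := by rintro a b ⟨ha1, ha2⟩ ⟨hb1, hb2⟩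
                     exact ⟨by rw [mul_add, ha1, hb1, add_zero],
                            by rw [add_mul, ha2, hb2, add_zero]⟩
      zero_mem' := by simp
      smul_mem' := by rintro c a ⟨ha1, ha2⟩
                      exact ⟨by rw [mul_smul_comm, ha1, smul_zero],
                             by rw [smul_mul_assoc, ha2, smul_zero]⟩ }
  let SG : Submodule ℂ A :=
    { carrier := {g : A | ∀ x ∈ I, g * x = 0 ∧ x * g = 0}
      add_mem' := by
        intro a b ha hb x hx
        exact ⟨by rw [add_mul, (ha x hx).1, (hb x hx).1, add_zero],
               by rw [mul_add, (ha x hx).2, (hb x hx).2, add_zero]⟩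
      zero_mem' := by intro x hx; simp
      smul_mem' := by
        intro c a ha x hx
        exact ⟨by rw [smul_mul_assoc, (ha x hx).1, smul_zero],
               by rw [mul_smul_comm, (ha x hx).2, smul_zero]⟩ }
  have hSA : Submodule.span ℂ (I.mkQ '' {a : A | e * a = 0 ∧ a * e = 0})
      = Submodule.map I.mkQ SA := by
    refine le_antisymm (Submodule.span_le.mpr ?_) ?_
    · rintro _ ⟨a, ha, rfl⟩; exact ⟨a, ha, rfl⟩
    · rintro _ ⟨a, ha, rfl⟩; exact Submodule.subset_span ⟨a, ha, rfl⟩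
  have hSG : Submodule.span ℂ (I.mkQ '' {g : A | ∀ x ∈ I, g * x = 0 ∧ x * g = 0})
      = Submodule.map I.mkQ SG := by
    refine le_antisymm (Submodule.span_le.mpr ?_) ?_
    · rintro _ ⟨a, ha, rfl⟩; exact ⟨a, ha, rfl⟩
    · rintro _ ⟨a, ha, rfl⟩; exact Submodule.subset_span ⟨a, ha, rfl⟩
  refine ⟨?_, ?_, ?_, fun a => ?_⟩
  · intro g hg g' hg' heq
    have hsub : g - g' ∈ I := by
      rwa [Submodule.mkQ_apply, Submodule.mkQ_apply, Submodule.Quotient.eq] at heq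
    have hG : ∀ x ∈ I, (g - g') * x = 0 ∧ x * (g - g') = 0 := by
      intro x hx
      exact ⟨by rw [sub_mul, (hg x hx).1, (hg' x hx).1, sub_zero],
             by rw [mul_sub, (hg x hx).2, (hg' x hx).2, sub_zero]⟩
    have := key _ hsub hG
    exact sub_eq_zero.mp this
  · rw [hSA, hSG]
    rw [eq_bot_iff]
    rintro z ⟨⟨a', ha', rfl⟩, g, hg, hgz⟩
    have hsub : g - a' ∈ I := (Submodule.Quotient.eq I).mp hgz
    have hg0 : g = 0 := by
      have h1 : e * (g - a') = 0 := (heG _ hsub).1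
      have h2 : e * g = g := (heunit g hg).1
      rw [mul_sub, h2, ha'.1, sub_zero] at h1
      exact h1
    rw [← hgz, hg0]
    simp
  · rw [hSA, hSG, eq_top_iff]
    rintro z -
    obtain ⟨a, rfl⟩ := I.mkQ_surjective z
    obtain ⟨a', g, h1, h2, h3, h4⟩ := decomp a
    rw [h4, map_add]
    exact Submodule.add_mem_sup ⟨a', ⟨h1, h2⟩, rfl⟩ ⟨g, h3, rfl⟩
  · obtain ⟨a', g, h1, h2, h3, h4⟩ := decomp a
    exact ⟨a', g, h1, h2, h3, by rw [h4, map_add]⟩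
end

section
/- Let A be a C*-algebra and B ⊆ A a closed *-subalgebra of finite codimension. Then there exists a closed two-sided ideal I of A with I ⊆ B and dim(A/I) < ∞ (Katsura's lemma). In fact one can take I = {x ∈ B : xA ⊆ B}, and then dim(A/I) ≤ dim(A/B) + dim(A/B)². -/
open scoped ContinuousMapZero

set_option maxHeartbeats 1000000 in
set_option synthInstance.maxHeartbeats 200000 in
lemma cfcn_mem_closure_adjoin {A : Type*} [NonUnitalCStarAlgebra A] (c : A)
    (hc : IsSelfAdjoint c) (f : ℝ → ℝ) (hf : ContinuousOn f (quasispectrum ℝ c))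
    (hf0 : f 0 = 0) :
    cfcₙ f c ∈ closure (NonUnitalStarAlgebra.adjoin ℝ {c} : Set A) := by
  rw [cfcₙ_apply f c hf hf0]
  have hcont := (cfcₙHom_isClosedEmbedding (R := ℝ) hc).continuous
  have hdense := ContinuousMapZero.adjoin_id_dense (s := quasispectrum ℝ c)
  have h1 : (cfcₙHom hc) ⟨⟨_, hf.restrict⟩, hf0⟩ ∈
      closure (cfcₙHom hc '' (NonUnitalStarAlgebra.adjoin ℝ
        {ContinuousMapZero.id (s := quasispectrum ℝ c)} : Set C(quasispectrum ℝ c, ℝ)₀)) :=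
    hcont.range_subset_closure_image_dense hdense ⟨_, rfl⟩
  refine closure_mono ?_ h1
  rw [← NonUnitalStarSubalgebra.coe_map, SetLike.coe_subset_coe,
    NonUnitalStarAlgHom.map_adjoin_singleton]
  refine NonUnitalStarAlgebra.adjoin_le ?_
  rw [Set.singleton_subset_iff, SetLike.mem_coe]
  have : (ContinuousMapZero.id (s := quasispectrum ℝ c)) =
      (⟨(ContinuousMap.id ℝ).restrict <| quasispectrum ℝ c, rfl⟩ : C(quasispectrum ℝ c, ℝ)₀) := rfl
  rw [cfcₙHom_id hc]
  exact NonUnitalStarAlgebra.self_mem_adjoin_singleton ℝ c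

set_option maxHeartbeats 2000000 in
set_option synthInstance.maxHeartbeats 200000 in
lemma katsura_star_mem {A : Type*} [NonUnitalCStarAlgebra A]
    (B : NonUnitalStarSubalgebra ℂ A) (hBclosed : IsClosed (B : Set A))
    {x : A} (hxB : x ∈ B) (hx : ∀ a : A, x * a ∈ B) :
    star x ∈ B ∧ ∀ a : A, star x * a ∈ B := by
  classical
  set S : Set A := {y : A | y ∈ B ∧ ∀ a : A, y * a ∈ B} with hSdef
  have hS_right : ∀ y ∈ S, ∀ a : A, y * a ∈ S := by
    rintro y ⟨hyB, hy⟩ a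
    exact ⟨hy a, fun b => by rw [mul_assoc]; exact hy (a * b)⟩
  have hS_Bleft : ∀ b ∈ B, ∀ y ∈ S, b * y ∈ S := by
    rintro b hb y ⟨hyB, hy⟩
    exact ⟨mul_mem hb hyB, fun a => by rw [mul_assoc]; exact mul_mem hb (hy a)⟩
  have hSclosed : IsClosed S := by
    have : S = (B : Set A) ∩ ⋂ a : A, (fun y : A => y * a) ⁻¹' (B : Set A) := by
      ext y; simp [hSdef, Set.mem_iInter]
    rw [this]
    exact hBclosed.inter (isClosed_iInter fun a =>
      hBclosed.preimage (continuous_id.mul continuous_const))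
  have hS_rsmul : ∀ (r : ℝ), ∀ y ∈ S, r • y ∈ S := by
    rintro r y ⟨hyB, hy⟩
    rw [← algebraMap_smul ℂ r y]
    exact ⟨SMulMemClass.smul_mem _ hyB, fun a => by
      rw [smul_mul_assoc]; exact SMulMemClass.smul_mem _ (hy a)⟩
  have hS_add : ∀ y ∈ S, ∀ z ∈ S, y + z ∈ S := by
    rintro y ⟨hyB, hy⟩ z ⟨hzB, hz⟩
    exact ⟨add_mem hyB hzB, fun a => by rw [add_mul]; exact add_mem (hy a) (hz a)⟩
  have hxS : x ∈ S := ⟨hxB, hx⟩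
  set c := star x * x with hcdef
  have hcS : c ∈ S := hS_Bleft _ (star_mem hxB) x hxS
  have hcsa : IsSelfAdjoint c := IsSelfAdjoint.star_mul_self x
  have hadj : (NonUnitalStarAlgebra.adjoin ℝ {c} : Set A) ⊆ {y | y ∈ S ∧ star y ∈ S} := by
    intro y hy
    induction hy using NonUnitalStarAlgebra.adjoin_induction with
    | mem z hz =>
      rw [Set.mem_singleton_iff] at hz
      subst hz
      exact ⟨hcS, by rw [hcsa.star_eq]; exact hcS⟩
    | add y z _ _ hy hz => exact ⟨hS_add _ hy.1 _ hz.1, by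
        rw [star_add]; exact hS_add _ hy.2 _ hz.2⟩
    | zero => exact ⟨⟨zero_mem _, fun a => by rw [zero_mul]; exact zero_mem _⟩, by
        rw [star_zero]; exact ⟨zero_mem _, fun a => by rw [zero_mul]; exact zero_mem _⟩⟩
    | mul y z _ _ hy hz => exact ⟨hS_right _ hy.1 _, by
        rw [star_mul]; exact hS_right _ hz.2 _⟩
    | smul r y _ hy => exact ⟨hS_rsmul r _ hy.1, by
        rw [star_smul, star_trivial]; exact hS_rsmul r _ hy.2⟩
    | star y _ hy => exact ⟨hy.2, by rw [star_star]; exact hy.1⟩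
  have hT : ∀ y ∈ closure (NonUnitalStarAlgebra.adjoin ℝ {c} : Set A), y ∈ S := by
    intro y hy
    have hcl : IsClosed {y : A | y ∈ S ∧ star y ∈ S} := by
      have : {y : A | y ∈ S ∧ star y ∈ S} = S ∩ (star ⁻¹' S) := rfl
      rw [this]
      exact hSclosed.inter (hSclosed.preimage continuous_star)
    exact (closure_minimal hadj hcl hy).1
  have hspec : ∀ t ∈ quasispectrum ℝ c, 0 ≤ t := by
    intro t ht
    rw [Unitization.quasispectrum_eq_spectrum_inr' ℝ ℂ c] at ht
    have hceq : ((c : A) : Unitization ℂ A) =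
        star ((x : A) : Unitization ℂ A) * ((x : A) : Unitization ℂ A) := by
      rw [hcdef, Unitization.inr_mul, Unitization.inr_star]
    rw [hceq] at ht
    exact spectrum_star_mul_self_nonneg t ht
  have key : ∀ ε : ℝ, 0 < ε → ∃ w ∈ S, ‖star x - w‖ ^ 2 ≤ ε := by
    intro ε hε
    set f : ℝ → ℝ := fun t => t / (t + ε) with hfdef
    have hfc : ContinuousOn f (quasispectrum ℝ c) := by
      apply ContinuousOn.div continuousOn_id (continuousOn_id.add continuousOn_const)
      intro t ht
      have := hspec t ht
      exact ne_of_gt (show (0:ℝ) < t + ε by linarith)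
    have hf0 : f 0 = 0 := by simp [hfdef]
    set d := cfcₙ f c with hddef
    have hdS : d ∈ S := hT _ (cfcn_mem_closure_adjoin c hcsa f hfc hf0)
    have hdsa : IsSelfAdjoint d := cfcₙ_predicate f c
    refine ⟨d * star x, hS_right _ hdS _, ?_⟩
    set z := d * star x - star x with hzdef
    have hzz : z * star z = d * c * d - d * c - c * d + c := by
      simp only [hzdef, star_sub, star_mul, star_star, hdsa.star_eq, hcdef]
      noncomm_ring
    have hidc : ContinuousOn (fun t : ℝ => t) (quasispectrum ℝ c) := continuousOn_id
    have e1 : cfcₙ (fun t => f t * t) c = d * c := by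
      rw [cfcₙ_mul f (fun t => t) c hfc hf0 hidc rfl, cfcₙ_id' ℝ c]
    have e2 : cfcₙ (fun t => f t * t * f t) c = d * c * d := by
      rw [cfcₙ_mul (fun t => f t * t) f c (hfc.mul hidc) (by simp [hf0]) hfc hf0, e1]
    have e3 : cfcₙ (fun t => t * f t) c = c * d := by
      rw [cfcₙ_mul (fun t => t) f c hidc rfl hfc hf0, cfcₙ_id' ℝ c]
    set g : ℝ → ℝ := fun t => f t * t * f t - f t * t - t * f t + t with hgdef
    have hcfc : cfcₙ g c = z * star z := by
      rw [hzz, hgdef]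
      rw [cfcₙ_add (fun t => f t * t * f t - f t * t - t * f t) (fun t => t) c
        ((((hfc.mul hidc).mul hfc).sub (hfc.mul hidc)).sub (hidc.mul hfc))
        (by simp [hf0]) hidc rfl]
      rw [cfcₙ_sub (fun t => f t * t * f t - f t * t) (fun t => t * f t) c
        (((hfc.mul hidc).mul hfc).sub (hfc.mul hidc)) (by simp [hf0]) (hidc.mul hfc)
        (by simp [hf0])]
      rw [cfcₙ_sub (fun t => f t * t * f t) (fun t => f t * t) c
        ((hfc.mul hidc).mul hfc) (by simp [hf0]) (hfc.mul hidc) (by simp [hf0])]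
      rw [e1, e2, e3, cfcₙ_id' ℝ c]
    have hbound : ‖z‖ ^ 2 ≤ ε := by
      have h1 : ‖z * star z‖ = ‖z‖ * ‖z‖ := CStarRing.norm_self_mul_star
      rw [sq, ← h1, ← hcfc]
      refine norm_cfcₙ_le fun t ht => ?_
      have ht0 := hspec t ht
      have htε : (0 : ℝ) < t + ε := by linarith
      have hgt : g t = t * ε ^ 2 / (t + ε) ^ 2 := by
        rw [hgdef]
        simp only [hfdef]
        field_simp
        ring
      rw [Real.norm_eq_abs, hgt, abs_of_nonneg (by positivity), div_le_iff₀ (by positivity)]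
      nlinarith [mul_nonneg (mul_nonneg hε.le ht0) ht0, mul_nonneg (mul_nonneg ht0 hε.le) hε.le,
        mul_nonneg (mul_nonneg hε.le hε.le) hε.le]
    calc ‖star x - (d * star x)‖ ^ 2 = ‖z‖ ^ 2 := by rw [hzdef, norm_sub_rev]
    _ ≤ ε := hbound
  have hxstar : star x ∈ closure S := by
    rw [Metric.mem_closure_iff]
    intro δ hδ
    obtain ⟨w, hwS, hw⟩ := key (δ ^ 2 / 2) (by positivity)
    refine ⟨w, hwS, ?_⟩
    rw [dist_eq_norm]
    nlinarith [norm_nonneg (star x - w)]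
  rw [hSclosed.closure_eq] at hxstar
  exact hxstar

lemma fd_of_sub_quot {K V : Type*} [Field K] [AddCommGroup V] [Module K V]
    (N : Submodule K V) [FiniteDimensional K N] [FiniteDimensional K (V ⧸ N)] :
    FiniteDimensional K V := by
  rw [FiniteDimensional, Module.finite_def]
  apply Submodule.fg_of_fg_map_of_fg_inf_ker N.mkQ
  · rw [Submodule.map_top, Submodule.range_mkQ]
    exact Module.finite_def.mp ‹_›
  · rw [top_inf_eq, Submodule.ker_mkQ]
    exact (Module.Finite.iff_fg).mp ‹_›

set_option maxHeartbeats 1000000 in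
set_option synthInstance.maxHeartbeats 1000000 in
/-- Katsura's lemma: a C*-subalgebra `B` of finite codimension `n` in a C*-algebra `A`
contains the closed two-sided ideal `I = {x ∈ B : xA ⊆ B}` of `A`, whose codimension in `A`
is at most `n + n²`. -/
theorem stmt_11 {A : Type*} [NonUnitalCStarAlgebra A]
    (B : NonUnitalStarSubalgebra ℂ A) (hBclosed : IsClosed (B : Set A)) (n : ℕ)
    (hfin : FiniteDimensional ℂ (A ⧸ B.toNonUnitalSubalgebra.toSubmodule))
    (hn : Module.finrank ℂ (A ⧸ B.toNonUnitalSubalgebra.toSubmodule) = n) :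
    ∃ I : Submodule ℂ A,
      (I : Set A) = {x : A | x ∈ B ∧ ∀ a : A, x * a ∈ B} ∧
      IsClosed (I : Set A) ∧
      (∀ x ∈ I, ∀ a : A, x * a ∈ I ∧ a * x ∈ I) ∧
      I ≤ B.toNonUnitalSubalgebra.toSubmodule ∧
      FiniteDimensional ℂ (A ⧸ I) ∧
      Module.finrank ℂ (A ⧸ I) ≤ n + n ^ 2 := by
  classical
  set M : Submodule ℂ A := B.toNonUnitalSubalgebra.toSubmodule with hMdef
  have hMmem : ∀ y : A, y ∈ M ↔ y ∈ B := fun y => Iff.rfl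
  set I : Submodule ℂ A :=
    { carrier := {x : A | x ∈ B ∧ ∀ a : A, x * a ∈ B}
      add_mem' := by
        rintro y z ⟨hyB, hy⟩ ⟨hzB, hz⟩
        exact ⟨add_mem hyB hzB, fun a => by rw [add_mul]; exact add_mem (hy a) (hz a)⟩
      zero_mem' := ⟨zero_mem _, fun a => by rw [zero_mul]; exact zero_mem _⟩
      smul_mem' := by
        rintro r y ⟨hyB, hy⟩
        exact ⟨SMulMemClass.smul_mem _ hyB, fun a => by
          rw [smul_mul_assoc]; exact SMulMemClass.smul_mem _ (hy a)⟩ } with hIdef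
  have hImem : ∀ y : A, y ∈ I ↔ y ∈ B ∧ ∀ a : A, y * a ∈ B := fun y => Iff.rfl
  have hI_le : I ≤ M := fun y hy => (hImem y).mp hy |>.1
  have hI_right : ∀ x ∈ I, ∀ a : A, x * a ∈ I := by
    rintro x hx a
    obtain ⟨hxB, hx'⟩ := (hImem x).mp hx
    exact (hImem _).mpr ⟨hx' a, fun b => by rw [mul_assoc]; exact hx' (a * b)⟩
  have hI_star : ∀ x ∈ I, star x ∈ I := by
    rintro x hx
    obtain ⟨hxB, hx'⟩ := (hImem x).mp hx
    exact (hImem _).mpr (katsura_star_mem B hBclosed hxB hx')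
  have hI_left : ∀ x ∈ I, ∀ a : A, a * x ∈ I := by
    intro x hx a
    have h1 : star x * star a ∈ I := hI_right _ (hI_star x hx) _
    have h2 : star (star x * star a) ∈ I := hI_star _ h1
    rwa [star_mul, star_star, star_star] at h2
  have hIclosed : IsClosed (I : Set A) := by
    have : (I : Set A) = (B : Set A) ∩ ⋂ a : A, (fun y : A => y * a) ⁻¹' (B : Set A) := by
      ext y; simp [hImem, Set.mem_iInter]
    rw [this]
    exact hBclosed.inter (isClosed_iInter fun a =>
      hBclosed.preimage (continuous_id.mul continuous_const))
  -- the representation of B on A ⧸ B by left multiplication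
  have hlift : ∀ b : M, M ≤ LinearMap.ker (M.mkQ ∘ₗ LinearMap.mul ℂ A (b : A)) := by
    rintro b y hy
    simp only [LinearMap.mem_ker, LinearMap.comp_apply, LinearMap.mul_apply',
      Submodule.mkQ_apply, Submodule.Quotient.mk_eq_zero]
    have hb : (b : A) ∈ B := b.2
    have hy' : y ∈ B := hy
    have : (b : A) * y ∈ B := mul_mem hb hy'
    exact this
  set ρ : ↥M →ₗ[ℂ] ((A ⧸ M) →ₗ[ℂ] (A ⧸ M)) :=
    { toFun := fun b => M.liftQ (M.mkQ ∘ₗ LinearMap.mul ℂ A (b : A)) (hlift b)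
      map_add' := by
        intro b₁ b₂
        refine Submodule.linearMap_qext _ ?_
        ext y
        simp [add_mul]
      map_smul' := by
        intro r b
        refine Submodule.linearMap_qext _ ?_
        ext y
        simp [smul_mul_assoc] } with hρdef
  have hρ_apply : ∀ (b : M) (y : A), ρ b (Submodule.Quotient.mk y) =
      Submodule.Quotient.mk ((b : A) * y) := by
    intro b y
    simp [hρdef]
  set φ : ↥M →ₗ[ℂ] (A ⧸ I) := I.mkQ ∘ₗ M.subtype with hφdef
  have hker : LinearMap.ker φ = LinearMap.ker ρ := by
    ext b
    simp only [LinearMap.mem_ker, hφdef, LinearMap.comp_apply, Submodule.subtype_apply,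
      Submodule.mkQ_apply, Submodule.Quotient.mk_eq_zero]
    constructor
    · intro hb
      obtain ⟨hbB, hb'⟩ := (hImem _).mp hb
      refine Submodule.linearMap_qext _ ?_
      ext y
      simp only [LinearMap.comp_apply, Submodule.mkQ_apply, LinearMap.zero_comp,
        LinearMap.zero_apply]
      rw [hρ_apply]
      rw [Submodule.Quotient.mk_eq_zero]
      exact hb' y
    · intro hb
      refine (hImem _).mpr ⟨b.2, fun a => ?_⟩
      have := congrArg (fun (ψ : (A ⧸ M) →ₗ[ℂ] (A ⧸ M)) => ψ (Submodule.Quotient.mk a)) hb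
      simp only [LinearMap.zero_apply] at this
      rw [hρ_apply, Submodule.Quotient.mk_eq_zero] at this
      exact this
  have hrange : LinearMap.range φ = M.map I.mkQ := by
    rw [hφdef, LinearMap.range_comp, Submodule.range_subtype]
  -- finite dimensionality
  have hfd_end : FiniteDimensional ℂ ((A ⧸ M) →ₗ[ℂ] (A ⧸ M)) := inferInstance
  have e1 : (↥M ⧸ LinearMap.ker φ) ≃ₗ[ℂ] LinearMap.range φ := φ.quotKerEquivRange
  have e2 : (↥M ⧸ LinearMap.ker φ) ≃ₗ[ℂ] LinearMap.range ρ := by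
    rw [hker]; exact ρ.quotKerEquivRange
  have e3 : (LinearMap.range φ : Submodule ℂ (A ⧸ I)) ≃ₗ[ℂ] LinearMap.range ρ :=
    e1.symm.trans e2
  have hfd_rangeρ : FiniteDimensional ℂ (LinearMap.range ρ) := inferInstance
  have hfd_N : FiniteDimensional ℂ (M.map I.mkQ) := by
    rw [← hrange]
    exact Module.Finite.equiv e3.symm
  have e4 : ((A ⧸ I) ⧸ (M.map I.mkQ)) ≃ₗ[ℂ] (A ⧸ M) :=
    Submodule.quotientQuotientEquivQuotient I M hI_le
  have hfd_quot : FiniteDimensional ℂ ((A ⧸ I) ⧸ (M.map I.mkQ)) := e4.symm.finiteDimensional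
  have hfd : FiniteDimensional ℂ (A ⧸ I) := fd_of_sub_quot (M.map I.mkQ)
  -- rank bound
  have hr1 : Module.finrank ℂ ((A ⧸ I) ⧸ (M.map I.mkQ)) = n := by
    rw [e4.finrank_eq, hn]
  have hr2 : Module.finrank ℂ (M.map I.mkQ) ≤ n ^ 2 := by
    have h1 : Module.finrank ℂ (M.map I.mkQ) = Module.finrank ℂ (LinearMap.range ρ) := by
      rw [← hrange]; exact e3.finrank_eq
    have h2 : Module.finrank ℂ (LinearMap.range ρ) ≤
        Module.finrank ℂ ((A ⧸ M) →ₗ[ℂ] (A ⧸ M)) :=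
      (LinearMap.range ρ).finrank_le
    have h3 : Module.finrank ℂ ((A ⧸ M) →ₗ[ℂ] (A ⧸ M)) = n * n := by
      rw [Module.finrank_linearMap, hn]
    rw [h1, sq]
    exact h2.trans h3.le
  have hr : Module.finrank ℂ (A ⧸ I) ≤ n + n ^ 2 := by
    have := Submodule.finrank_quotient_add_finrank (M.map I.mkQ)
    omega
  exact ⟨I, rfl, hIclosed, fun x hx a => ⟨hI_right x hx a, hI_left x hx a⟩, hI_le, hfd, hr⟩
end
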